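/- arXiv:2509.03016 — 6 statements merged into one kernel-verified Lean document; each statement's English description precedes it below -/
import Mathlib

section
/- Let F be an algebraically closed field of prime characteristic p, let m ≥ 1, and let λ_1,…,λ_m ∈ F all be nonzero. Then the twisted Heisenberg Lie algebra h^λ_m admits a restricted Lie algebra structure (i.e., by Jacobson's criterion, for every x ∈ h^λ_m there exists y ∈ h^λ_m with (ad x)^p = ad y as linear endomorphisms) if and only if p > 2 and λ_1^{p−1} = λ_2^{p−1} = ⋯ = λ_m^{p−1}. -/
set_option maxHeartbeats 1000000

/-- Over an algebraically closed field `F` of prime characteristic `p`,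
for `m ≥ 1` and nonzero parameters `λ₁,…,λ_m`, the twisted Heisenberg Lie algebra
`h^λ_m` (realized as any Lie algebra with a basis `e 0, …, e (2m+1)` satisfying the
displayed bracket relations, 0-indexed so that `e (2*m) = e_{2m+1}` and
`e (2*m+1) = e_{2m+2}` in the paper's notation) admits a restricted structure —
via Jacobson's criterion: every `(ad x)^p` is inner — iff `p > 2` and all
`λ_i^{p-1}` coincide. -/
theorem stmt_0
    (F : Type*) [Field F] [IsAlgClosed F]
    (p : ℕ) [Fact (Nat.Prime p)] [CharP F p]
    (m : ℕ) (hm : 1 ≤ m)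
    (lam : ℕ → F) (hlam : ∀ i, i < m → lam i ≠ 0)
    (L : Type*) [LieRing L] [LieAlgebra F L]
    (b : Module.Basis (Fin (2*m+2)) F L)
    (e : ℕ → L) (he : ∀ i : Fin (2*m+2), e (i : ℕ) = b i)
    (hbr : ∀ i j : ℕ, i < 2*m+2 → j < 2*m+2 →
      ⁅e i, e j⁆ =
        if i < m ∧ j = m + i then e (2*m)
        else if j < m ∧ i = m + j then - e (2*m)
        else if i = 2*m+1 ∧ j < m then lam j • e (m + j)
        else if i = 2*m+1 ∧ m ≤ j ∧ j < 2*m then lam (j-m) • e (j-m)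
        else if j = 2*m+1 ∧ i < m then - (lam i • e (m + i))
        else if j = 2*m+1 ∧ m ≤ i ∧ i < 2*m then - (lam (i-m) • e (i-m))
        else 0) :
    (∀ x : L, ∃ y : L, (LieAlgebra.ad F L x) ^ p = LieAlgebra.ad F L y)
      ↔ (2 < p ∧ ∀ i, i < m → ∀ j, j < m → lam i ^ (p-1) = lam j ^ (p-1)) := by
  have hbm : ∀ (j : ℕ) (h : j < 2*m+2), e j = b ⟨j, h⟩ := fun j h => he ⟨j, h⟩
  -- basic brackets
  have hb1 : ∀ i, i < m → ⁅e i, e (m+i)⁆ = e (2*m) := by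
    intro i hi
    have h := hbr i (m+i) (by omega) (by omega)
    split_ifs at h <;> first | exact h | omega
  have hb2 : ∀ i, i < m → ⁅e (m+i), e i⁆ = - e (2*m) := by
    intro i hi
    have h := hbr (m+i) i (by omega) (by omega)
    split_ifs at h <;> first | exact h | omega
  have hb3 : ∀ i, i < m → ⁅e (2*m+1), e i⁆ = lam i • e (m+i) := by
    intro i hi
    have h := hbr (2*m+1) i (by omega) (by omega)
    split_ifs at h <;> first | exact h | omega
  have hb4 : ∀ i, i < m → ⁅e (2*m+1), e (m+i)⁆ = lam i • e i := by
    intro i hi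
    have h := hbr (2*m+1) (m+i) (by omega) (by omega)
    rw [show m+i-m = i by omega] at h
    split_ifs at h <;> first | exact h | omega
  -- c is central
  have hc : ∀ z : L, ⁅e (2*m), z⁆ = 0 := by
    have : LieAlgebra.ad F L (e (2*m)) = 0 := by
      apply b.ext
      intro j
      rw [LieAlgebra.ad_apply, ← he j, LinearMap.zero_apply]
      have h := hbr (2*m) (j : ℕ) (by omega) (j.isLt)
      split_ifs at h <;> first | exact h | omega
    intro z
    simpa [LieAlgebra.ad_apply] using LinearMap.congr_fun this z
  have hc' : ∀ z : L, ⁅z, e (2*m)⁆ = 0 := by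
    intro z; rw [← lie_skew, hc, neg_zero]
  set c : L := e (2*m) with hcdef
  set d : L := e (2*m+1) with hddef
  set D : Module.End F L := LieAlgebra.ad F L d with hDdef
  have hDapp : ∀ u : L, D u = ⁅d, u⁆ := fun u => rfl
  set V : Submodule F L := Submodule.span F (e '' Set.Iio (2*m)) with hVdef
  have heV : ∀ j, j < 2*m → e j ∈ V := fun j hj =>
    Submodule.subset_span ⟨j, hj, rfl⟩
  -- D maps V to V
  have hDV : ∀ u ∈ V, D u ∈ V := by
    intro u hu
    have : V ≤ Submodule.comap D V := by
      rw [hVdef]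
      apply Submodule.span_le.2
      rintro _ ⟨j, hj, rfl⟩
      rw [Set.mem_Iio] at hj
      show D (e j) ∈ V
      rw [hDapp]
      rcases Nat.lt_or_ge j m with hjm | hjm
      · rw [hb3 j hjm]
        exact Submodule.smul_mem _ _ (heV _ (by omega))
      · obtain ⟨i, rfl⟩ : ∃ i, j = m + i := ⟨j - m, by omega⟩
        rw [hb4 i (by omega)]
        exact Submodule.smul_mem _ _ (heV _ (by omega))
    exact this hu
  -- brackets of V elements land in the span of c
  have hVVc : ∀ u ∈ V, ∀ w ∈ V, ⁅u, w⁆ ∈ Submodule.span F {c} := by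
    have base : ∀ j, j < 2*m → ∀ k, k < 2*m → ⁅e j, e k⁆ ∈ Submodule.span F {c} := by
      intro j hj k hk
      have h := hbr j k (by omega) (by omega)
      rw [h]
      split_ifs <;>
        first
          | omega
          | exact Submodule.mem_span_singleton_self _
          | exact Submodule.neg_mem _ (Submodule.mem_span_singleton_self _)
          | exact Submodule.zero_mem _
    have h1 : ∀ k, k < 2*m → ∀ w ∈ V, ⁅e k, w⁆ ∈ Submodule.span F {c} := by
      intro k hk w hw
      have hle : V ≤ Submodule.comap (LieAlgebra.ad F L (e k)) (Submodule.span F {c}) := by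
        rw [hVdef]
        apply Submodule.span_le.2
        rintro _ ⟨j, hj, rfl⟩
        rw [Set.mem_Iio] at hj
        show ⁅e k, e j⁆ ∈ Submodule.span F {c}
        exact base k hk j hj
      exact hle hw
    intro u hu w hw
    have hle : V ≤ Submodule.comap (LieAlgebra.ad F L w) (Submodule.span F {c}) := by
      rw [hVdef]
      apply Submodule.span_le.2
      rintro _ ⟨k, hk, rfl⟩
      rw [Set.mem_Iio] at hk
      show ⁅w, e k⁆ ∈ Submodule.span F {c}
      rw [← lie_skew]
      exact Submodule.neg_mem _ (h1 k hk w hw)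
    have : ⁅w, u⁆ ∈ Submodule.span F {c} := hle hu
    rw [← lie_skew]
    exact Submodule.neg_mem _ this
  -- everything in span{c} is central
  have hcen : ∀ z ∈ Submodule.span F {c}, ∀ w : L, ⁅w, z⁆ = 0 := by
    intro z hz w
    obtain ⟨β, rfl⟩ := Submodule.mem_span_singleton.1 hz
    rw [lie_smul, ← lie_skew, hc w, neg_zero, smul_zero]
  have hsq1 : ∀ i, i < m → D (D (e i)) = (lam i * lam i) • e i := by
    intro i hi
    rw [hDapp (e i), hb3 i hi, map_smul, hDapp, hb4 i hi, smul_smul]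
  have hsq2 : ∀ i, i < m → D (D (e (m+i))) = (lam i * lam i) • e (m+i) := by
    intro i hi
    rw [hDapp (e (m+i)), hb4 i hi, map_smul, hDapp, hb3 i hi, smul_smul]
  have hDev : ∀ l : ℕ, ∀ i, i < m →
      (D ^ (2*l)) (e i) = (lam i ^ (2*l)) • e i ∧
      (D ^ (2*l)) (e (m+i)) = (lam i ^ (2*l)) • e (m+i) := by
    intro l
    induction l with
    | zero => intro i hi; simp
    | succ n ih =>
      intro i hi
      obtain ⟨ih1, ih2⟩ := ih i hi
      have key : ∀ u : L, (D ^ (2*(n+1))) u = (D ^ (2*n)) (D (D u)) := by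
        intro u
        rw [show 2*(n+1) = 2*n+1+1 by ring, pow_succ, pow_succ,
          Module.End.mul_apply, Module.End.mul_apply]
      have hsc : lam i * lam i * lam i ^ (2*n) = lam i ^ (2*(n+1)) := by ring
      constructor
      · rw [key, hsq1 i hi, map_smul, ih1, smul_smul, hsc]
      · rw [key, hsq2 i hi, map_smul, ih2, smul_smul, hsc]
  have hDodd : ∀ l : ℕ, ∀ i, i < m →
      (D ^ (2*l+1)) (e i) = (lam i ^ (2*l+1)) • e (m+i) := by
    intro l i hi
    rw [pow_succ, Module.End.mul_apply, hDapp, hb3 i hi, map_smul, (hDev l i hi).2,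
      smul_smul, show lam i * lam i ^ (2*l) = lam i ^ (2*l+1) by ring]
  -- D powers preserve V
  have hDpV : ∀ k : ℕ, ∀ u ∈ V, (D ^ k) u ∈ V := by
    intro k
    induction k with
    | zero => intro u hu; simpa using hu
    | succ n ih =>
      intro u hu
      rw [pow_succ, Module.End.mul_apply]
      exact ih _ (hDV u hu)
  -- decomposition of an arbitrary element
  have hdecomp : ∀ x : L, ∃ v ∈ V, ∃ γ δ : F, x = v + γ • c + δ • d := by
    intro x
    have htop : x ∈ V ⊔ Submodule.span F {c, d} := by
      have : (⊤ : Submodule F L) ≤ V ⊔ Submodule.span F {c, d} := by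
        rw [← b.span_eq]
        apply Submodule.span_le.2
        rintro _ ⟨j, rfl⟩
        rw [← he j]
        rcases Nat.lt_or_ge (j : ℕ) (2*m) with hj | hj
        · exact Submodule.mem_sup_left (heV _ hj)
        · have hj2 : (j : ℕ) = 2*m ∨ (j : ℕ) = 2*m+1 := by omega
          rcases hj2 with hj2 | hj2 <;> rw [hj2]
          · exact Submodule.mem_sup_right (Submodule.subset_span (by left; rfl))
          · exact Submodule.mem_sup_right (Submodule.subset_span (by right; rfl))
      exact this trivial
    obtain ⟨v, hv, z, hz, hxz⟩ := Submodule.mem_sup.1 htop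
    obtain ⟨γ, δ, hgd⟩ := Submodule.mem_span_pair.1 hz
    exact ⟨v, hv, γ, δ, by rw [← hxz, ← hgd, add_assoc]⟩
  have adapp : ∀ z u : L, (LieAlgebra.ad F L z) u = ⁅z, u⁆ := fun z u => rfl
  constructor
  · intro h
    -- expansion of ⁅y, e i⁆ for i < m
    have hbra : ∀ i (hi : i < m), ∀ y : L, ⁅y, e i⁆ =
        (b.repr y ⟨m+i, by omega⟩) • (-c) +
        (b.repr y ⟨2*m+1, by omega⟩) • (lam i • e (m+i)) := by
      intro i hi y
      have hterm : ∀ j : Fin (2*m+2), ⁅b j, e i⁆ =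
          (if j = (⟨m+i, by omega⟩ : Fin (2*m+2)) then -c
           else if j = (⟨2*m+1, by omega⟩ : Fin (2*m+2)) then lam i • e (m+i) else 0) := by
        intro j
        rw [← he j]
        have hh := hbr (j : ℕ) i (j.isLt) (by omega)
        simp only [Fin.ext_iff]
        split_ifs at hh ⊢ <;> first | exact hh | omega
      have hsum : ⁅y, e i⁆ = ∑ j : Fin (2*m+2), b.repr y j • ⁅b j, e i⁆ := by
        conv_lhs => rw [← b.sum_repr y]
        rw [← lie_skew, ← adapp (e i), map_sum]
        rw [← Finset.sum_neg_distrib]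
        apply Finset.sum_congr rfl
        intro j _
        rw [map_smul, adapp, ← smul_neg, lie_skew]
      rw [hsum]
      have hterm2 : ∀ j : Fin (2*m+2), b.repr y j • ⁅b j, e i⁆ =
          (if j = (⟨m+i, by omega⟩ : Fin (2*m+2)) then b.repr y j • (-c) else 0) +
          (if j = (⟨2*m+1, by omega⟩ : Fin (2*m+2)) then b.repr y j • (lam i • e (m+i)) else 0) := by
        intro j
        rw [hterm j]
        split_ifs with h1 h2
        · exfalso
          rw [h1] at h2
          have := congrArg Fin.val h2
          simp only [] at this
          omega
        · simp
        · simp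
        · simp
      rw [Finset.sum_congr rfl (fun j _ => hterm2 j), Finset.sum_add_distrib,
        Finset.sum_ite_eq' Finset.univ (⟨m+i, by omega⟩ : Fin (2*m+2)),
        Finset.sum_ite_eq' Finset.univ (⟨2*m+1, by omega⟩ : Fin (2*m+2)),
        if_pos (Finset.mem_univ _), if_pos (Finset.mem_univ _)]
    rcases Nat.Prime.eq_two_or_odd' (Fact.out : Nat.Prime p) with h2 | ⟨t, ht⟩
    · -- p = 2 is impossible
      exfalso
      obtain ⟨y, hy⟩ := h d
      have h1 := LinearMap.congr_fun hy (e 0)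
      rw [adapp, ← hDdef] at h1
      rw [h2, show (2:ℕ) = 2*1 by norm_num, (hDev 1 0 (by omega)).1,
        hbra 0 (by omega) y] at h1
      have hcb : c = b ⟨2*m, by omega⟩ := hbm (2*m) (by omega)
      rw [hcb, hbm 0 (by omega), hbm (m+0) (by omega)] at h1
      have hne1 : (⟨2*m, by omega⟩ : Fin (2*m+2)) ≠ ⟨0, by omega⟩ :=
        by intro hcon; rw [Fin.mk.injEq] at hcon; omega
      have hne2 : (⟨m+0, by omega⟩ : Fin (2*m+2)) ≠ ⟨0, by omega⟩ :=
        by intro hcon; rw [Fin.mk.injEq] at hcon; omega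
      have h3 := congrArg (fun z => b.repr z ⟨0, by omega⟩) h1
      simp only [map_smul, map_add, map_neg, Finsupp.add_apply, Finsupp.smul_apply,
        Finsupp.neg_apply, smul_eq_mul, Module.Basis.repr_self, Finsupp.single_eq_same,
        Finsupp.single_eq_of_ne' hne1, Finsupp.single_eq_of_ne' hne2] at h3
      simp only [mul_one, mul_zero, neg_zero, mul_neg, add_zero, zero_add] at h3
      exact hlam 0 (by omega) (by
        have : lam 0 * lam 0 = 0 := by
          rw [show lam 0 * lam 0 = lam 0 ^ (2*1) by ring, h3]
        rcases mul_eq_zero.1 this with h | h <;> exact h)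
    · -- p odd
      have hp2 : 2 < p := by
        have := (Fact.out : Nat.Prime p).two_le
        omega
      refine ⟨hp2, ?_⟩
      obtain ⟨y, hy⟩ := h d
      have key : ∀ i, i < m → lam i ^ (p-1) = b.repr y ⟨2*m+1, by omega⟩ := by
        intro i hi
        have h1 := LinearMap.congr_fun hy (e i)
        rw [adapp, ← hDdef, ht, hDodd t i hi, hbra i hi y] at h1
        have hcb : c = b ⟨2*m, by omega⟩ := hbm (2*m) (by omega)
        rw [hcb, hbm (m+i) (by omega)] at h1
        have hne1 : (⟨2*m, by omega⟩ : Fin (2*m+2)) ≠ ⟨m+i, by omega⟩ :=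
          by intro hcon; rw [Fin.mk.injEq] at hcon; omega
        have h3 := congrArg (fun z => b.repr z ⟨m+i, by omega⟩) h1
        simp only [map_smul, map_add, map_neg, Finsupp.add_apply, Finsupp.smul_apply,
          Finsupp.neg_apply, smul_eq_mul, Module.Basis.repr_self, Finsupp.single_eq_same,
          Finsupp.single_eq_of_ne' hne1] at h3
        simp only [mul_one, mul_zero, neg_zero, mul_neg, add_zero, zero_add] at h3
        have h4 : lam i ^ (p-1) * lam i = b.repr y ⟨2*m+1, by omega⟩ * lam i := by
          rw [show lam i ^ (p-1) * lam i = lam i ^ (p-1+1) by ring,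
            show p-1+1 = 2*t+1 by omega, h3]
        exact mul_right_cancel₀ (hlam i hi) h4
      intro i hi j hj
      rw [key i hi, key j hj]
  · rintro ⟨hp2, heq⟩ x
    -- p is odd and > 2
    have hoddp : ∃ l : ℕ, p = 2*l+3 := by
      rcases (Fact.out : Nat.Prime p).eq_two_or_odd' with h2 | ⟨t, ht⟩
      · omega
      · exact ⟨t-1, by omega⟩
    obtain ⟨l, hl⟩ := hoddp
    set μ : F := lam 0 ^ (2*l+2) with hmu
    -- the (p-1)-st power of D is μ • id on V
    have heigB : ∀ j, j < 2*m → (D ^ (2*l+2)) (e j) = μ • e j := by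
      intro j hj
      have h2l : (2:ℕ)*(l+1) = 2*l+2 := by ring
      rcases Nat.lt_or_ge j m with hjm | hjm
      · have := (hDev (l+1) j hjm).1
        rw [h2l] at this
        rw [this, hmu]
        have : lam j ^ (p-1) = lam 0 ^ (p-1) := heq j hjm 0 (by omega)
        rw [show p-1 = 2*l+2 by omega] at this
        rw [this]
      · obtain ⟨i, rfl⟩ : ∃ i, j = m + i := ⟨j - m, by omega⟩
        have := (hDev (l+1) i (by omega)).2
        rw [h2l] at this
        rw [this, hmu]
        have : lam i ^ (p-1) = lam 0 ^ (p-1) := heq i (by omega) 0 (by omega)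
        rw [show p-1 = 2*l+2 by omega] at this
        rw [this]
    have heig : ∀ u ∈ V, (D ^ (2*l+2)) u = μ • u := by
      intro u hu
      have hker : V ≤ LinearMap.ker (D ^ (2*l+2) - μ • (1 : Module.End F L)) := by
        rw [hVdef]
        apply Submodule.span_le.2
        rintro _ ⟨j, hj, rfl⟩
        rw [Set.mem_Iio] at hj
        rw [SetLike.mem_coe, LinearMap.mem_ker, LinearMap.sub_apply, LinearMap.smul_apply,
          Module.End.one_apply, heigB j hj, sub_self]
      have := hker hu
      rw [LinearMap.mem_ker, LinearMap.sub_apply, LinearMap.smul_apply,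
        Module.End.one_apply, sub_eq_zero] at this
      exact this
    obtain ⟨v, hv, γ, δ, hx⟩ := hdecomp x
    have hstep : ∀ u : L, ⁅x, u⁆ = δ • D u + ⁅v, u⁆ := by
      intro u
      rw [hx, add_lie, add_lie, smul_lie, smul_lie, hc, smul_zero, add_zero, hDapp,
        add_comm]
    have hiter : ∀ k : ℕ, ∀ u ∈ V,
        ((LieAlgebra.ad F L x) ^ (k+1)) u = δ^k • (δ • (D^(k+1)) u + ⁅v, (D^k) u⁆) := by
      intro k
      induction k with
      | zero =>
        intro u hu
        rw [pow_one, adapp, hstep u, pow_one, pow_zero, pow_zero, one_smul,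
          Module.End.one_apply]
      | succ n ih =>
        intro u hu
        have e1 : (D^(n+1+1)) u = D ((D^(n+1)) u) := by
          rw [pow_succ', Module.End.mul_apply]
        rw [pow_succ', Module.End.mul_apply, ih u hu]
        rw [map_smul, map_add, map_smul, adapp, adapp]
        rw [hcen _ (hVVc v hv _ (hDpV n u hu)) x, hstep]
        rw [e1]
        module
    refine ⟨(δ^(2*l+2) * μ) • v + (δ^(2*l+3) * μ) • d, ?_⟩
    apply b.ext
    intro j
    rw [← he j, adapp, add_lie, smul_lie, smul_lie, hl]
    rcases Nat.lt_or_ge (j:ℕ) (2*m) with hj | hj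
    · -- basis vector in V
      have hu : e (j:ℕ) ∈ V := heV _ hj
      rw [show 2*l+3 = (2*l+2)+1 by omega, hiter (2*l+2) _ hu]
      rw [show (D^(2*l+2+1)) (e (j:ℕ)) = (D^(2*l+2)) (D (e (j:ℕ))) from by
        rw [pow_succ, Module.End.mul_apply]]
      rw [heig _ (hDV _ hu), heig _ hu, lie_smul, hDapp]
      module
    · have hj2 : (j : ℕ) = 2*m ∨ (j : ℕ) = 2*m+1 := by omega
      rcases hj2 with hj2 | hj2 <;> rw [hj2]
      · -- the central element c
        rw [show 2*l+3 = (2*l+2)+1 by omega, pow_succ, Module.End.mul_apply, adapp,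
          hc' x, map_zero, hc' v, hc' d, smul_zero, smul_zero, add_zero]
      · -- the element d
        have hxd : (LieAlgebra.ad F L x) d = -(D v) := by
          rw [adapp, hx, add_lie, add_lie, smul_lie, smul_lie, hc, smul_zero, add_zero,
            lie_self, smul_zero, add_zero, ← lie_skew, hDapp]
        rw [show 2*l+3 = (2*l+1)+1+1 by omega, pow_succ, Module.End.mul_apply, hxd,
          map_neg, hiter (2*l+1) _ (hDV v hv)]
        rw [show (D^(2*l+1+1)) (D v) = (D^(2*l+2)) (D v) from by
            rw [show 2*l+1+1 = 2*l+2 by omega],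
          show (D^(2*l+1)) (D v) = (D^(2*l+2)) v from by
            conv_rhs => rw [show 2*l+2 = (2*l+1)+1 by omega, pow_succ, Module.End.mul_apply],
          heig _ (hDV v hv), heig v hv, lie_smul, lie_self, smul_zero, lie_self,
          smul_zero, add_zero, ← lie_skew v d, hDapp]
        module
end

section
/- Let F be a field of odd prime characteristic p, let n ≥ 1, let κ_1,…,κ_n ∈ F be nonzero, and let c ∈ F. Let B be the linear endomorphism of F^{2n} defined on the standard basis ω_1,…,ω_{2n} by Bω_j = κ_j ω_{n+j} and Bω_{n+j} = κ_j ω_j for 1 ≤ j ≤ n. Then B^p = c·B if and only if κ_j^{p−1} = c for every 1 ≤ j ≤ n. -/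
/-- Let `F` have odd prime characteristic `p`, `n ≥ 1`,
`κ₀,…,κ_{n-1}` nonzero (0-indexed), `c ∈ F`.  Let `B` be the endomorphism of
`F^{2n}` acting on coordinates by `(B v)_i = κ_i v_{i+n}` for `i < n` and
`(B v)_i = κ_{i-n} v_{i-n}` for `n ≤ i < 2n` (i.e. `B ω_j = κ_j ω_{n+j}`,
`B ω_{n+j} = κ_j ω_j` on the standard basis).  Then `B^p = c • B` iff
`κ_j^{p-1} = c` for all `j < n`. -/
theorem stmt_1
    (F : Type*) [Field F]
    (p : ℕ) [Fact (Nat.Prime p)] [CharP F p] (hp2 : 2 < p)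
    (n : ℕ) (hn : 1 ≤ n)
    (kap : ℕ → F) (hkap : ∀ j, j < n → kap j ≠ 0)
    (c : F)
    (B : Module.End F (Fin (2*n) → F))
    (hB : ∀ (v : Fin (2*n) → F) (i : Fin (2*n)),
      B v i =
        if h : (i : ℕ) < n then kap i * v ⟨(i : ℕ) + n, by omega⟩
        else kap ((i : ℕ) - n) * v ⟨(i : ℕ) - n, by have := i.isLt; omega⟩) :
    B ^ p = c • B ↔ ∀ j, j < n → kap j ^ (p-1) = c := by
  set idx : Fin (2*n) → ℕ := fun i => if (i : ℕ) < n then (i : ℕ) else (i : ℕ) - n with hidx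
  have hBB : ∀ (v : Fin (2*n) → F) (i : Fin (2*n)),
      B (B v) i = (kap (idx i))^2 * v i := by
    intro v i
    rw [hB]
    by_cases h : (i:ℕ) < n
    · rw [dif_pos h, hB]
      have h2 : ¬ ((⟨(i:ℕ) + n, by omega⟩ : Fin (2*n)) : ℕ) < n := by simp
      rw [dif_neg h2]
      have e1 : ((⟨(i:ℕ) + n, by omega⟩ : Fin (2*n)) : ℕ) - n = (i:ℕ) := by simp
      have e2 : (⟨((⟨(i:ℕ) + n, by omega⟩ : Fin (2*n)) : ℕ) - n, by
          have := (⟨(i:ℕ) + n, by omega⟩ : Fin (2*n)).isLt; omega⟩ : Fin (2*n)) = i := by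
        ext; simp
      rw [e2, e1, hidx]
      simp only [if_pos h]
      ring
    · rw [dif_neg h, hB]
      have hi := i.isLt
      have h2 : ((⟨(i:ℕ) - n, by omega⟩ : Fin (2*n)) : ℕ) < n := by simp; omega
      rw [dif_pos h2]
      have e1 : ((⟨(i:ℕ) - n, by omega⟩ : Fin (2*n)) : ℕ) = (i:ℕ) - n := rfl
      have e2 : (⟨((⟨(i:ℕ) - n, by omega⟩ : Fin (2*n)) : ℕ) + n, by omega⟩ : Fin (2*n)) = i := by
        ext; simp; omega
      rw [e2, e1, hidx]
      simp only [if_neg h]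
      ring
  have heven : ∀ (k : ℕ) (v : Fin (2*n) → F) (i : Fin (2*n)),
      ((B ^ (2*k)) v) i = (kap (idx i))^(2*k) * v i := by
    intro k
    induction k with
    | zero => intro v i; simp
    | succ k ih =>
      intro v i
      have : B ^ (2*(k+1)) = B ^ (2*k) * (B * B) := by
        rw [show 2*(k+1) = 2*k+2 by ring, pow_add, pow_two]
      rw [this]
      simp only [Module.End.mul_apply]
      rw [ih, hBB]
      ring
  have hkeyP : ∀ (v : Fin (2*n) → F) (i : Fin (2*n)),
      ((B ^ p) v) i = (kap (idx i))^(p-1) * (B v) i := by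
    intro v i
    have hpodd : p - 1 = 2 * ((p-1)/2) := by
      obtain ⟨k, hk⟩ := (Fact.out : Nat.Prime p).odd_of_ne_two (by omega)
      omega
    have : B ^ p = B ^ (p-1) * B := by
      rw [← pow_succ, Nat.sub_add_cancel (show 1 ≤ p by omega)]
    rw [this, Module.End.mul_apply, hpodd, heven]
  have hidxlt : ∀ i : Fin (2*n), idx i < n := by
    intro i
    have := i.isLt
    rw [hidx]
    dsimp only
    split <;> omega
  constructor
  · intro h j hj
    have hc := congrArg (fun f : Module.End F (Fin (2*n) → F) =>
      (f (Pi.single (⟨j+n, by omega⟩ : Fin (2*n)) (1:F))) ⟨j, by omega⟩) h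
    rw [hkeyP] at hc
    have hBv : B (Pi.single (⟨j+n, by omega⟩ : Fin (2*n)) (1:F)) ⟨j, by omega⟩ = kap j := by
      rw [hB]
      rw [dif_pos (show ((⟨j, by omega⟩ : Fin (2*n)) : ℕ) < n from hj)]
      simp
    rw [hBv] at hc
    have hidxj : idx ⟨j, by omega⟩ = j := by rw [hidx]; simp [hj]
    rw [hidxj] at hc
    have hrhs : (c • B) (Pi.single (⟨j+n, by omega⟩ : Fin (2*n)) (1:F)) ⟨j, by omega⟩
        = c * kap j := by
      rw [LinearMap.smul_apply, Pi.smul_apply, smul_eq_mul, hBv]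
    rw [hrhs] at hc
    exact mul_right_cancel₀ (hkap j hj) hc
  · intro h
    refine LinearMap.ext fun v => funext fun i => ?_
    rw [hkeyP, h (idx i) (hidxlt i), LinearMap.smul_apply, Pi.smul_apply, smul_eq_mul]
end

section
/- Let F be an algebraically closed field of characteristic p > 2, let m ≥ 1, and let λ_1,…,λ_m ∈ F be nonzero with λ_1^{p−1} = ⋯ = λ_m^{p−1} =: |λ|. Then for every element g = Σ_{i=1}^{2m+2} a_i e_i of the twisted Heisenberg Lie algebra h^λ_m one has (ad g)^p = a_{2m+2}^{p−1}·|λ|·(ad g) as linear endomorphisms of h^λ_m. -/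
/-- For `F` algebraically closed of characteristic `p > 2`, `m ≥ 1`,
nonzero `λ_i` with all `λ_i^{p-1}` equal to `|λ| = λ₀^{p-1}`, every element
`g = Σ a_i • e i` of the twisted Heisenberg Lie algebra `h^λ_m` (0-indexed basis
`e 0,…,e (2m+1)`, where `e (2*m+1)` is the paper's `e_{2m+2}`) satisfies
`(ad g)^p = a_{2m+2}^{p-1} |λ| (ad g)`. -/
theorem stmt_2
    (F : Type*) [Field F] [IsAlgClosed F]
    (p : ℕ) [Fact (Nat.Prime p)] [CharP F p] (hp2 : 2 < p)
    (m : ℕ) (hm : 1 ≤ m)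
    (lam : ℕ → F) (hlam : ∀ i, i < m → lam i ≠ 0)
    (hlameq : ∀ i, i < m → lam i ^ (p-1) = lam 0 ^ (p-1))
    (L : Type*) [LieRing L] [LieAlgebra F L]
    (b : Module.Basis (Fin (2*m+2)) F L)
    (e : ℕ → L) (he : ∀ i : Fin (2*m+2), e (i : ℕ) = b i)
    (hbr : ∀ i j : ℕ, i < 2*m+2 → j < 2*m+2 →
      ⁅e i, e j⁆ =
        if i < m ∧ j = m + i then e (2*m)
        else if j < m ∧ i = m + j then - e (2*m)
        else if i = 2*m+1 ∧ j < m then lam j • e (m + j)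
        else if i = 2*m+1 ∧ m ≤ j ∧ j < 2*m then lam (j-m) • e (j-m)
        else if j = 2*m+1 ∧ i < m then - (lam i • e (m + i))
        else if j = 2*m+1 ∧ m ≤ i ∧ i < 2*m then - (lam (i-m) • e (i-m))
        else 0) :
    ∀ a : ℕ → F,
      (LieAlgebra.ad F L (∑ i ∈ Finset.range (2*m+2), a i • e i)) ^ p
        = (a (2*m+1) ^ (p-1) * lam 0 ^ (p-1)) •
            LieAlgebra.ad F L (∑ i ∈ Finset.range (2*m+2), a i • e i) := by
  intro a
  set s := a (2*m+1) with hs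
  set g := ∑ i ∈ Finset.range (2*m+2), a i • e i with hg
  set A := LieAlgebra.ad F L g with hA
  have hAe : ∀ j : ℕ, A (e j) = ∑ i ∈ Finset.range (2*m+2), a i • ⁅e i, e j⁆ := by
    intro j
    rw [hA, LieAlgebra.ad_apply, hg]
    have key : ∀ t : Finset ℕ, ⁅∑ i ∈ t, a i • e i, e j⁆ = ∑ i ∈ t, a i • ⁅e i, e j⁆ := by
      intro t
      induction t using Finset.induction_on with
      | empty => simp [zero_lie]
      | insert x t h ih => rw [Finset.sum_insert h, Finset.sum_insert h, add_lie, smul_lie, ih]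
    exact key _
  -- action on basis vectors
  have h1 : ∀ j, j < m → A (e j) = (s * lam j) • e (m + j) - a (m + j) • e (2*m) := by
    intro j hj
    rw [hAe j]
    have key : ∀ i ∈ Finset.range (2*m+2),
        a i • ⁅e i, e j⁆ =
          (if i = m + j then (-(a (m + j))) • e (2*m) else 0)
          + (if i = 2*m+1 then (s * lam j) • e (m + j) else 0) := by
      intro i hi
      rw [Finset.mem_range] at hi
      rw [hbr i j hi (by omega)]
      rcases eq_or_ne i (m + j) with h | h
      · subst h
        rw [if_neg (show ¬(m + j < m ∧ j = m + (m + j)) by omega),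
            if_pos (show j < m ∧ m + j = m + j by omega),
            if_pos rfl,
            if_neg (show ¬(m + j = 2*m+1) by omega)]
        module
      · rcases eq_or_ne i (2*m+1) with h' | h'
        · subst h'
          rw [if_neg (show ¬(2*m+1 < m ∧ j = m + (2*m+1)) by omega),
              if_neg (show ¬(j < m ∧ 2*m+1 = m + j) by omega),
              if_pos (show 2*m+1 = 2*m+1 ∧ j < m by omega),
              if_neg (show ¬(2*m+1 = m + j) by omega),
              if_pos rfl, ← hs]
          module
        · rw [if_neg (show ¬(i < m ∧ j = m + i) by omega),
              if_neg (show ¬(j < m ∧ i = m + j) by omega),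
              if_neg (show ¬(i = 2*m+1 ∧ j < m) by omega),
              if_neg (show ¬(i = 2*m+1 ∧ m ≤ j ∧ j < 2*m) by omega),
              if_neg (show ¬(j = 2*m+1 ∧ i < m) by omega),
              if_neg (show ¬(j = 2*m+1 ∧ m ≤ i ∧ i < 2*m) by omega),
              if_neg h, if_neg h']
          simp
    rw [Finset.sum_congr rfl key, Finset.sum_add_distrib,
        Finset.sum_ite_eq' (Finset.range (2*m+2)) (m + j) (fun _ => (-(a (m + j))) • e (2*m)),
        Finset.sum_ite_eq' (Finset.range (2*m+2)) (2*m+1) (fun _ => (s * lam j) • e (m + j)),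
        if_pos (Finset.mem_range.2 (by omega)), if_pos (Finset.mem_range.2 (by omega))]
    module
  have h2 : ∀ j, j < m → A (e (m + j)) = (s * lam j) • e j + a j • e (2*m) := by
    intro j hj
    rw [hAe (m + j)]
    have key : ∀ i ∈ Finset.range (2*m+2),
        a i • ⁅e i, e (m + j)⁆ =
          (if i = j then (a j) • e (2*m) else 0)
          + (if i = 2*m+1 then (s * lam j) • e j else 0) := by
      intro i hi
      rw [Finset.mem_range] at hi
      rw [hbr i (m + j) hi (by omega)]
      rcases eq_or_ne i j with h | h
      · subst h
        rw [if_pos (show i < m ∧ m + i = m + i by omega),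
            if_pos rfl,
            if_neg (show ¬(i = 2*m+1) by omega)]
        module
      · rcases eq_or_ne i (2*m+1) with h' | h'
        · subst h'
          rw [if_neg (show ¬(2*m+1 < m ∧ m + j = m + (2*m+1)) by omega),
              if_neg (show ¬(m + j < m ∧ 2*m+1 = m + (m + j)) by omega),
              if_neg (show ¬(2*m+1 = 2*m+1 ∧ m + j < m) by omega),
              if_pos (show 2*m+1 = 2*m+1 ∧ m ≤ m + j ∧ m + j < 2*m by omega),
              if_neg (show ¬(2*m+1 = j) by omega),
              if_pos rfl, ← hs,
              show m + j - m = j by omega]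
          module
        · rw [if_neg (show ¬(i < m ∧ m + j = m + i) by omega),
              if_neg (show ¬(m + j < m ∧ i = m + (m + j)) by omega),
              if_neg (show ¬(i = 2*m+1 ∧ m + j < m) by omega),
              if_neg (show ¬(i = 2*m+1 ∧ m ≤ m + j ∧ m + j < 2*m) by omega),
              if_neg (show ¬(m + j = 2*m+1 ∧ i < m) by omega),
              if_neg (show ¬(m + j = 2*m+1 ∧ m ≤ i ∧ i < 2*m) by omega),
              if_neg h, if_neg h']
          simp
    rw [Finset.sum_congr rfl key, Finset.sum_add_distrib,
        Finset.sum_ite_eq' (Finset.range (2*m+2)) j (fun _ => (a j) • e (2*m)),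
        Finset.sum_ite_eq' (Finset.range (2*m+2)) (2*m+1) (fun _ => (s * lam j) • e j),
        if_pos (Finset.mem_range.2 (by omega)), if_pos (Finset.mem_range.2 (by omega))]
    module
  have h3 : A (e (2*m)) = 0 := by
    rw [hAe (2*m)]
    apply Finset.sum_eq_zero
    intro i hi
    rw [Finset.mem_range] at hi
    rw [hbr i (2*m) hi (by omega),
        if_neg (show ¬(i < m ∧ 2*m = m + i) by omega),
        if_neg (show ¬(2*m < m ∧ i = m + (2*m)) by omega),
        if_neg (show ¬(i = 2*m+1 ∧ 2*m < m) by omega),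
        if_neg (show ¬(i = 2*m+1 ∧ m ≤ 2*m ∧ 2*m < 2*m) by omega),
        if_neg (show ¬(2*m = 2*m+1 ∧ i < m) by omega),
        if_neg (show ¬(2*m = 2*m+1 ∧ m ≤ i ∧ i < 2*m) by omega),
        smul_zero]
  have hb5 : ∀ j, j < m → ⁅e j, e (2*m+1)⁆ = -(lam j • e (m + j)) := by
    intro j hj
    rw [hbr j (2*m+1) (by omega) (by omega),
        if_neg (show ¬(j < m ∧ 2*m+1 = m + j) by omega),
        if_neg (show ¬(2*m+1 < m ∧ j = m + (2*m+1)) by omega),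
        if_neg (show ¬(j = 2*m+1 ∧ 2*m+1 < m) by omega),
        if_neg (show ¬(j = 2*m+1 ∧ m ≤ 2*m+1 ∧ 2*m+1 < 2*m) by omega),
        if_pos (show 2*m+1 = 2*m+1 ∧ j < m from ⟨rfl, hj⟩)]
  have hb6 : ∀ j, j < m → ⁅e (m + j), e (2*m+1)⁆ = -(lam j • e j) := by
    intro j hj
    rw [hbr (m + j) (2*m+1) (by omega) (by omega),
        if_neg (show ¬(m + j < m ∧ 2*m+1 = m + (m + j)) by omega),
        if_neg (show ¬(2*m+1 < m ∧ m + j = m + (2*m+1)) by omega),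
        if_neg (show ¬(m + j = 2*m+1 ∧ 2*m+1 < m) by omega),
        if_neg (show ¬(m + j = 2*m+1 ∧ m ≤ 2*m+1 ∧ 2*m+1 < 2*m) by omega),
        if_neg (show ¬(2*m+1 = 2*m+1 ∧ m + j < m) by omega),
        if_pos (show 2*m+1 = 2*m+1 ∧ m ≤ m + j ∧ m + j < 2*m by omega),
        show m + j - m = j by omega]
  let w : ℕ → L := fun j => (-(a j * lam j)) • e (m + j) + (-(a (m + j) * lam j)) • e j
  have hwdef : ∀ j, w j = (-(a j * lam j)) • e (m + j) + (-(a (m + j) * lam j)) • e j :=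
    fun _ => rfl
  have h4 : A (e (2*m+1)) = ∑ j ∈ Finset.range m, w j := by
    rw [hAe (2*m+1)]
    have hz : ∀ i, 2*m ≤ i → i < 2*m+2 → a i • ⁅e i, e (2*m+1)⁆ = 0 := by
      intro i hi1 hi2
      rw [hbr i (2*m+1) hi2 (by omega),
          if_neg (show ¬(i < m ∧ 2*m+1 = m + i) by omega),
          if_neg (show ¬(2*m+1 < m ∧ i = m + (2*m+1)) by omega),
          if_neg (show ¬(i = 2*m+1 ∧ 2*m+1 < m) by omega),
          if_neg (show ¬(i = 2*m+1 ∧ m ≤ 2*m+1 ∧ 2*m+1 < 2*m) by omega),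
          if_neg (show ¬(2*m+1 = 2*m+1 ∧ i < m) by omega),
          if_neg (show ¬(2*m+1 = 2*m+1 ∧ m ≤ i ∧ i < 2*m) by omega),
          smul_zero]
    rw [show 2*m+2 = m+m+1+1 by omega, Finset.sum_range_succ, Finset.sum_range_succ,
        hz (m+m) (by omega) (by omega), hz (m+m+1) (by omega) (by omega),
        add_zero, add_zero, Finset.sum_range_add, ← Finset.sum_add_distrib]
    refine Finset.sum_congr rfl fun j hj => ?_
    rw [Finset.mem_range] at hj
    rw [hb5 j hj, hb6 j hj, hwdef j]
    module
  -- eigenvector facts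
  have E1 : ∀ j, j < m → A (A (e j)) = (s * lam j) • A (e (m + j)) := by
    intro j hj
    rw [h1 j hj, map_sub, map_smul, map_smul, h3, smul_zero, sub_zero]
  have E2 : ∀ j, j < m → A (A (e (m + j))) = (s * lam j) • A (e j) := by
    intro j hj
    rw [h2 j hj, map_add, map_smul, map_smul, h3, smul_zero, add_zero]
  have Eu1 : ∀ j, j < m → A (A (A (e j))) = ((s * lam j) * (s * lam j)) • A (e j) := by
    intro j hj
    rw [E1 j hj, map_smul, E2 j hj, smul_smul]
  have Eu2 : ∀ j, j < m →
      A (A (A (e (m + j)))) = ((s * lam j) * (s * lam j)) • A (e (m + j)) := by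
    intro j hj
    rw [E2 j hj, map_smul, E1 j hj, smul_smul]
  have Ew : ∀ j, j < m → A (A (w j)) = ((s * lam j) * (s * lam j)) • w j := by
    intro j hj
    simp only [hwdef, map_add, map_sub, map_smul, h1 j hj, h2 j hj, h3, smul_zero,
      sub_zero, add_zero]
    module
  -- iteration
  have iter : ∀ (u : L) (μ : F), A (A u) = μ • u → ∀ n : ℕ, (A ^ (2*n)) u = μ ^ n • u := by
    intro u μ h n
    induction n with
    | zero => simp
    | succ n ih =>
      rw [show 2*(n+1) = 2*n+1+1 by ring, pow_succ, pow_succ,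
          Module.End.mul_apply, Module.End.mul_apply, h, map_smul, ih, smul_smul, ← pow_succ']
  have hpp : Nat.Prime p := Fact.out
  obtain ⟨k, hk⟩ : Odd p := hpp.odd_of_ne_two (by omega)
  have hc : ∀ j, j < m → ((s * lam j) * (s * lam j)) ^ k = s ^ (p-1) * lam 0 ^ (p-1) := by
    intro j hj
    rw [show (s * lam j) * (s * lam j) = (s * lam j)^2 by ring, ← pow_mul,
        show 2*k = p - 1 by omega, mul_pow, hlameq j hj]
  have hsplit : A ^ p = A ^ (2*k) * A := by
    conv_lhs => rw [show p = 2*k+1 by omega]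
    rw [pow_succ]
  rw [hsplit]
  refine b.ext fun i => ?_
  have hilt : (i : ℕ) < 2*m+2 := i.isLt
  rw [Module.End.mul_apply, LinearMap.smul_apply, ← he i]
  obtain hi | hi | hi | hi :
      (i:ℕ) < m ∨ (m ≤ (i:ℕ) ∧ (i:ℕ) < 2*m) ∨ (i:ℕ) = 2*m ∨ (i:ℕ) = 2*m+1 := by omega
  · rw [iter (A (e (i:ℕ))) _ (Eu1 _ hi) k, hc _ hi]
  · have hij : (i:ℕ) = m + ((i:ℕ) - m) := by omega
    have hjm : (i:ℕ) - m < m := by omega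
    rw [hij, iter (A (e (m + ((i:ℕ) - m)))) _ (Eu2 _ hjm) k, hc _ hjm]
  · rw [hi, h3, map_zero, smul_zero]
  · rw [hi, h4, map_sum, Finset.smul_sum]
    refine Finset.sum_congr rfl fun j hj => ?_
    rw [Finset.mem_range] at hj
    rw [iter (w j) _ (Ew j hj) k, hc _ hj]
end

section
/- Let F be an algebraically closed field of prime characteristic p, let m,n,t ≥ 1, and let λ_1,…,λ_m, κ_1,…,κ_n ∈ F be nonzero. Then the twisted Heisenberg Lie superalgebra h^{λ,κ}_{m,n,t} admits a restricted Lie superalgebra structure if and only if p > 2 and λ_1^{p−1} = ⋯ = λ_m^{p−1} = κ_1^{p−1} = ⋯ = κ_n^{p−1}. -/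
set_option maxHeartbeats 2000000

attribute [local instance 100] LieRing.ofAssociativeRing


/-- Over an algebraically closed field `F` of prime characteristic `p`,
for `m,n,t ≥ 1` and nonzero `λ_i, κ_j`, the twisted Heisenberg Lie superalgebra
`h^{λ,κ}_{m,n,t}` — encoded by its even part `L = h^λ_m` (basis `e 0,…,e (2m+1)`,
0-indexed) and the representation `ρ : L → End(W)` on the odd part
`W = F^{2n+t}` (coordinates `0,…,2n-1` are the `ω`'s, `2n,…,2n+t-1` the `η`'s) —
admits a restricted structure, i.e. for every `x ∈ L` there is `y ∈ L` with
`(ad x)^p = ad y` on `L` and `(ρ x)^p = ρ y` on `W`, iff `p > 2` and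
`λ_1^{p-1} = ⋯ = λ_m^{p-1} = κ_1^{p-1} = ⋯ = κ_n^{p-1}`. -/
theorem stmt_3
    (F : Type*) [Field F] [IsAlgClosed F]
    (p : ℕ) [Fact (Nat.Prime p)] [CharP F p]
    (m n t : ℕ) (hm : 1 ≤ m) (hn : 1 ≤ n) (ht : 1 ≤ t)
    (lam kap : ℕ → F) (hlam : ∀ i, i < m → lam i ≠ 0) (hkap : ∀ j, j < n → kap j ≠ 0)
    (L : Type*) [LieRing L] [LieAlgebra F L]
    (b : Module.Basis (Fin (2*m+2)) F L)
    (e : ℕ → L) (he : ∀ i : Fin (2*m+2), e (i : ℕ) = b i)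
    (hbr : ∀ i j : ℕ, i < 2*m+2 → j < 2*m+2 →
      ⁅e i, e j⁆ =
        if i < m ∧ j = m + i then e (2*m)
        else if j < m ∧ i = m + j then - e (2*m)
        else if i = 2*m+1 ∧ j < m then lam j • e (m + j)
        else if i = 2*m+1 ∧ m ≤ j ∧ j < 2*m then lam (j-m) • e (j-m)
        else if j = 2*m+1 ∧ i < m then - (lam i • e (m + i))
        else if j = 2*m+1 ∧ m ≤ i ∧ i < 2*m then - (lam (i-m) • e (i-m))
        else 0)
    (ρ : L →ₗ⁅F⁆ Module.End F (Fin (2*n+t) → F))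
    (hρ0 : ∀ i, i < 2*m+1 → ρ (e i) = 0)
    (hρ1 : ∀ (v : Fin (2*n+t) → F) (i : Fin (2*n+t)),
      ρ (e (2*m+1)) v i =
        if h1 : (i : ℕ) < n then kap i * v ⟨(i : ℕ) + n, by omega⟩
        else if h2 : (i : ℕ) < 2*n then
          kap ((i : ℕ) - n) * v ⟨(i : ℕ) - n, by have := i.isLt; omega⟩
        else 0) :
    (∀ x : L, ∃ y : L,
        (LieAlgebra.ad F L x) ^ p = LieAlgebra.ad F L y ∧ (ρ x) ^ p = ρ y)
      ↔ (2 < p ∧ (∀ i, i < m → ∀ j, j < m → lam i ^ (p-1) = lam j ^ (p-1))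
          ∧ (∀ i, i < n → ∀ j, j < n → kap i ^ (p-1) = kap j ^ (p-1))
          ∧ (∀ i, i < m → ∀ j, j < n → lam i ^ (p-1) = kap j ^ (p-1))) := by
  classical
  have heb : ∀ (k : ℕ) (hk : k < 2*m+2), e k = b ⟨k, hk⟩ := fun k hk => he ⟨k, hk⟩
  -- specialized bracket lemmas
  have BRj0 : ∀ (i j : ℕ) (hi : i < 2*m+2) (hj : j < m), i ≠ m+j → i ≠ 2*m+1 →
      ⁅b ⟨i, hi⟩, b ⟨j, by omega⟩⁆ = 0 := by
    intro i j hi hj h1 h2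
    rw [← heb i hi, ← heb j (by omega), hbr i j hi (by omega),
      if_neg (by omega), if_neg (by omega), if_neg (by omega), if_neg (by omega),
      if_neg (by omega), if_neg (by omega)]
  have BRj1 : ∀ (j : ℕ) (hj : j < m),
      ⁅b ⟨m+j, by omega⟩, b ⟨j, by omega⟩⁆ = - b ⟨2*m, by omega⟩ := by
    intro j hj
    rw [← heb (m+j) (by omega), ← heb j (by omega), hbr (m+j) j (by omega) (by omega),
      if_neg (by omega), if_pos (by omega), heb (2*m) (by omega)]
  have BRj2 : ∀ (j : ℕ) (hj : j < m),
      ⁅b ⟨2*m+1, by omega⟩, b ⟨j, by omega⟩⁆ = lam j • b ⟨m+j, by omega⟩ := by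
    intro j hj
    rw [← heb (2*m+1) (by omega), ← heb j (by omega), hbr (2*m+1) j (by omega) (by omega),
      if_neg (by omega), if_neg (by omega), if_pos (by omega), heb (m+j) (by omega)]
  have BRk0 : ∀ (i j : ℕ) (hi : i < 2*m+2) (hj : j < m), i ≠ j → i ≠ 2*m+1 →
      ⁅b ⟨i, hi⟩, b ⟨m+j, by omega⟩⁆ = 0 := by
    intro i j hi hj h1 h2
    rw [← heb i hi, ← heb (m+j) (by omega), hbr i (m+j) hi (by omega),
      if_neg (by omega), if_neg (by omega), if_neg (by omega), if_neg (by omega),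
      if_neg (by omega), if_neg (by omega)]
  have BRk1 : ∀ (j : ℕ) (hj : j < m),
      ⁅b ⟨j, by omega⟩, b ⟨m+j, by omega⟩⁆ = b ⟨2*m, by omega⟩ := by
    intro j hj
    rw [← heb j (by omega), ← heb (m+j) (by omega), hbr j (m+j) (by omega) (by omega),
      if_pos (by omega), heb (2*m) (by omega)]
  have BRk2 : ∀ (j : ℕ) (hj : j < m),
      ⁅b ⟨2*m+1, by omega⟩, b ⟨m+j, by omega⟩⁆ = lam j • b ⟨j, by omega⟩ := by
    intro j hj
    rw [← heb (2*m+1) (by omega), ← heb (m+j) (by omega), hbr (2*m+1) (m+j) (by omega) (by omega),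
      if_neg (by omega), if_neg (by omega), if_neg (by omega), if_pos (by omega)]
    rw [show m + j - m = j from by omega, heb j (by omega)]
  have BRc : ∀ (i : Fin (2*m+2)), ⁅b i, b ⟨2*m, by omega⟩⁆ = 0 := by
    intro i
    have hi := i.isLt
    rw [show b i = b ⟨i.1, hi⟩ from by rw [Fin.eta], ← heb i.1 hi, ← heb (2*m) (by omega),
      hbr i.1 (2*m) hi (by omega),
      if_neg (by omega), if_neg (by omega), if_neg (by omega), if_neg (by omega),
      if_neg (by omega), if_neg (by omega)]
  -- expansion of bracket
  have hexp : ∀ (z w : L), ⁅z, w⁆ = ∑ i : Fin (2*m+2), b.repr z i • ⁅b i, w⁆ := by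
    intro z w
    have h1 : ⁅z, w⁆ = - (LieAlgebra.ad F L w) z := by
      rw [LieAlgebra.ad_apply, lie_skew]
    rw [h1]
    conv_lhs => rw [← Module.Basis.sum_repr b z]
    rw [map_sum, neg_eq_iff_eq_neg]
    rw [← Finset.sum_neg_distrib]
    refine Finset.sum_congr rfl fun i _ => ?_
    rw [map_smul, LieAlgebra.ad_apply, ← smul_neg, lie_skew]
  have hAdc : ∀ (z : L), ⁅z, b ⟨2*m, by omega⟩⁆ = 0 := by
    intro z
    rw [hexp]
    refine Finset.sum_eq_zero fun i _ => ?_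
    rw [BRc i, smul_zero]
  have hAdj : ∀ (z : L) (j : ℕ) (hj : j < m),
      ⁅z, b ⟨j, by omega⟩⁆ = (b.repr z ⟨2*m+1, by omega⟩ * lam j) • b ⟨m+j, by omega⟩
        + (-(b.repr z ⟨m+j, by omega⟩)) • b ⟨2*m, by omega⟩ := by
    intro z j hj
    rw [hexp]
    rw [← Finset.sum_subset (Finset.subset_univ ({⟨m+j, by omega⟩, ⟨2*m+1, by omega⟩} :
      Finset (Fin (2*m+2))))]
    · rw [Finset.sum_pair (by simp [Fin.ext_iff]; omega)]
      rw [BRj1 j hj, BRj2 j hj, smul_neg, smul_smul, neg_smul]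
      abel
    · intro i _ hi
      have h1 : i.1 ≠ m+j := fun hv => hi (by simp [Fin.ext_iff, hv])
      have h2 : i.1 ≠ 2*m+1 := fun hv => hi (by simp [Fin.ext_iff, hv])
      have h0 := BRj0 i.1 j i.isLt hj h1 h2
      rw [Fin.eta] at h0
      rw [h0, smul_zero]
  have hAdk : ∀ (z : L) (j : ℕ) (hj : j < m),
      ⁅z, b ⟨m+j, by omega⟩⁆ = (b.repr z ⟨2*m+1, by omega⟩ * lam j) • b ⟨j, by omega⟩
        + (b.repr z ⟨j, by omega⟩) • b ⟨2*m, by omega⟩ := by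
    intro z j hj
    rw [hexp]
    rw [← Finset.sum_subset (Finset.subset_univ ({⟨j, by omega⟩, ⟨2*m+1, by omega⟩} :
      Finset (Fin (2*m+2))))]
    · rw [Finset.sum_pair (by simp [Fin.ext_iff]; omega)]
      rw [BRk1 j hj, BRk2 j hj, smul_smul]
      abel
    · intro i _ hi
      have h1 : i.1 ≠ j := fun hv => hi (by simp [Fin.ext_iff, hv])
      have h2 : i.1 ≠ 2*m+1 := fun hv => hi (by simp [Fin.ext_iff, hv])
      have h0 := BRk0 i.1 j i.isLt hj h1 h2
      rw [Fin.eta] at h0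
      rw [h0, smul_zero]
  have hrhoz : ∀ (z : L), ρ z = b.repr z ⟨2*m+1, by omega⟩ • ρ (b ⟨2*m+1, by omega⟩) := by
    intro z
    calc ρ z = ρ.toLinearMap (∑ i : Fin (2*m+2), b.repr z i • b i) := by
          rw [Module.Basis.sum_repr]; rfl
      _ = ∑ i : Fin (2*m+2), b.repr z i • ρ.toLinearMap (b i) := by
          rw [map_sum]; simp only [map_smul]
      _ = b.repr z ⟨2*m+1, by omega⟩ • ρ (b ⟨2*m+1, by omega⟩) := by
          refine Finset.sum_eq_single _ ?_ ?_
          · intro i _ hne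
            have hlt : i.1 < 2*m+1 := by
              have h2 := i.isLt
              rcases Nat.lt_or_ge i.1 (2*m+1) with h | h
              · exact h
              · exact absurd (by simp only [Fin.ext_iff]; omega) hne
            have h0 := hρ0 i.1 hlt
            rw [heb i.1 i.isLt, Fin.eta] at h0
            rw [show ρ.toLinearMap (b i) = ρ (b i) from rfl, h0, smul_zero]
          · intro h; exact absurd (Finset.mem_univ _) h
  have hadz : ∀ (z w : L), (LieAlgebra.ad F L z) w = ⁅z, w⁆ := fun z w => rfl
  have hA0 : ∀ (z : L), (LieAlgebra.ad F L z) (b ⟨2*m, by omega⟩) = 0 := by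
    intro z; rw [hadz]; exact hAdc z
  have hA2 : ∀ (z : L) (j : ℕ) (hj : j < m),
      (LieAlgebra.ad F L z) ((LieAlgebra.ad F L z) (b ⟨j, by omega⟩))
        = (b.repr z ⟨2*m+1, by omega⟩ * lam j) • (LieAlgebra.ad F L z) (b ⟨m+j, by omega⟩)
      ∧ (LieAlgebra.ad F L z) ((LieAlgebra.ad F L z) (b ⟨m+j, by omega⟩))
        = (b.repr z ⟨2*m+1, by omega⟩ * lam j) • (LieAlgebra.ad F L z) (b ⟨j, by omega⟩) := by
    intro z j hj
    constructor
    · rw [show (LieAlgebra.ad F L z) (b ⟨j, by omega⟩) = _ from (hadz _ _).trans (hAdj z j hj)]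
      rw [map_add, map_smul, map_smul, hA0 z, smul_zero, add_zero]
    · rw [show (LieAlgebra.ad F L z) (b ⟨m+j, by omega⟩) = _ from (hadz _ _).trans (hAdk z j hj)]
      rw [map_add, map_smul, map_smul, hA0 z, smul_zero, add_zero]
  have hpow : ∀ (z : L) (j : ℕ) (hj : j < m) (k : ℕ),
      ((LieAlgebra.ad F L z)^(2*k+1)) (b ⟨j, by omega⟩)
        = ((b.repr z ⟨2*m+1, by omega⟩ * lam j)^(2*k)) • (LieAlgebra.ad F L z) (b ⟨j, by omega⟩)
      ∧ ((LieAlgebra.ad F L z)^(2*k+1)) (b ⟨m+j, by omega⟩)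
        = ((b.repr z ⟨2*m+1, by omega⟩ * lam j)^(2*k)) • (LieAlgebra.ad F L z) (b ⟨m+j, by omega⟩) := by
    intro z j hj k
    induction k with
    | zero => simp
    | succ k ih =>
      have hstep : ∀ w : L, ((LieAlgebra.ad F L z)^(2*(k+1)+1)) w
          = (LieAlgebra.ad F L z) ((LieAlgebra.ad F L z) (((LieAlgebra.ad F L z)^(2*k+1)) w)) := by
        intro w
        rw [show 2*(k+1)+1 = ((2*k+1)+1)+1 from by ring, pow_succ', pow_succ',
          Module.End.mul_apply, Module.End.mul_apply]
      constructor
      · rw [hstep, ih.1, map_smul, map_smul, (hA2 z j hj).1, map_smul, (hA2 z j hj).2,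
          smul_smul, smul_smul]
        congr 1
        ring
      · rw [hstep, ih.2, map_smul, map_smul, (hA2 z j hj).2, map_smul, (hA2 z j hj).1,
          smul_smul, smul_smul]
        congr 1
        ring
  have hpowc : ∀ (z : L) (k : ℕ), ((LieAlgebra.ad F L z)^(k+1)) (b ⟨2*m, by omega⟩) = 0 := by
    intro z k
    rw [pow_succ, Module.End.mul_apply, hA0 z, map_zero]
  -- representation lemmas
  have hR1 : ∀ (v : Fin (2*n+t) → F) (i : ℕ) (hi : i < 2*n+t),
      ρ (b ⟨2*m+1, by omega⟩) v ⟨i, hi⟩ =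
        if _h1 : i < n then kap i * v ⟨i+n, by omega⟩
        else if _h2 : i < 2*n then kap (i-n) * v ⟨i-n, by omega⟩ else 0 := by
    intro v i hi
    rw [← heb (2*m+1) (by omega)]
    exact hρ1 v ⟨i, hi⟩
  have hR2 : ∀ (v : Fin (2*n+t) → F) (i : ℕ) (hi : i < 2*n+t),
      ρ (b ⟨2*m+1, by omega⟩) (ρ (b ⟨2*m+1, by omega⟩) v) ⟨i, hi⟩ =
        (if i < n then kap i ^ 2 else if i < 2*n then kap (i-n) ^ 2 else 0) * v ⟨i, hi⟩ := by
    intro v i hi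
    rw [hR1]
    by_cases h1 : i < n
    · rw [dif_pos h1, hR1, dif_neg (show ¬ i+n < n by omega), dif_pos (show i+n < 2*n by omega),
        if_pos h1]
      simp only [Nat.add_sub_cancel]
      ring
    · rw [dif_neg h1, if_neg h1]
      by_cases h2 : i < 2*n
      · rw [dif_pos h2, hR1, dif_pos (show i-n < n by omega), if_pos h2]
        simp only [show i-n+n = i from by omega]
        ring
      · rw [dif_neg h2, if_neg h2, zero_mul]
  have hR2k : ∀ (k : ℕ) (v : Fin (2*n+t) → F) (i : ℕ) (hi : i < 2*n+t),
      ((ρ (b ⟨2*m+1, by omega⟩))^(2*k+2)) v ⟨i, hi⟩ =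
        (if i < n then kap i ^ (2*k+2) else if i < 2*n then kap (i-n) ^ (2*k+2) else 0)
          * v ⟨i, hi⟩ := by
    intro k
    induction k with
    | zero =>
      intro v i hi
      rw [show 2*0+2 = 1+1 from rfl, pow_succ, pow_one, Module.End.mul_apply]
      exact hR2 v i hi
    | succ k ih =>
      intro v i hi
      rw [show 2*(k+1)+2 = 2+(2*k+2) from by ring, pow_add, Module.End.mul_apply,
        pow_two, Module.End.mul_apply, hR2 _ i hi, ih]
      by_cases h1 : i < n
      · simp only [if_pos h1]
        ring
      · by_cases h2 : i < 2*n
        · simp only [if_neg h1, if_pos h2]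
          ring
        · simp only [if_neg h1, if_neg h2]
          ring
  have hRp : ∀ (k0 : ℕ), p = 2*k0+3 → ∀ (v : Fin (2*n+t) → F) (i : ℕ) (hi : i < 2*n+t),
      ((ρ (b ⟨2*m+1, by omega⟩))^p) v ⟨i, hi⟩ =
        (if i < n then kap i ^ (p-1) else if i < 2*n then kap (i-n) ^ (p-1) else 1)
          * ρ (b ⟨2*m+1, by omega⟩) v ⟨i, hi⟩ := by
    intro k0 hk0 v i hi
    subst hk0
    rw [show 2*k0+3 = 1+(2*k0+2) from by ring, pow_add, pow_one, Module.End.mul_apply,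
      show 1+(2*k0+2) - 1 = 2*k0+2 from by omega]
    rw [hR1]
    by_cases h1 : i < n
    · rw [dif_pos h1, hR2k k0 _ (i+n) (by omega), if_neg (show ¬ i+n < n by omega),
        if_pos (show i+n < 2*n by omega), if_pos h1, hR1, dif_pos h1]
      simp only [Nat.add_sub_cancel]
      ring
    · rw [dif_neg h1, if_neg h1]
      by_cases h2 : i < 2*n
      · rw [dif_pos h2, hR2k k0 _ (i-n) (by omega), if_pos (show i-n < n by omega),
          if_pos h2, hR1, dif_neg h1, dif_pos h2]
        ring
      · rw [dif_neg h2, if_neg h2, hR1, dif_neg h1, dif_neg h2, mul_zero]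
  constructor
  · -- forward direction
    intro H
    have hp : Nat.Prime p := Fact.out
    obtain ⟨y, hy1, hy2⟩ := H (b ⟨2*m+1, by omega⟩)
    have hx1 : b.repr (b ⟨2*m+1, by omega⟩) (⟨2*m+1, by omega⟩ : Fin (2*m+2)) = 1 := by simp
    have hp3 : 2 < p := by
      by_contra hcon
      have hp2 : p = 2 := by have := hp.two_le; omega
      rw [hp2] at hy1
      have h0 := DFunLike.congr_fun hy1 (b ⟨0, by omega⟩)
      rw [pow_two, Module.End.mul_apply, hadz (b ⟨2*m+1, by omega⟩),
        hadz (b ⟨2*m+1, by omega⟩), BRj2 0 (by omega), lie_smul, BRk2 0 (by omega),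
        hadz y (b ⟨0, by omega⟩), hAdj y 0 (by omega)] at h0
      have h1 := congrArg (fun w => b.repr w (⟨0, by omega⟩ : Fin (2*m+2))) h0
      have hne1 : (⟨m, by omega⟩ : Fin (2*m+2)) ≠ (⟨0, by omega⟩ : Fin (2*m+2)) := by
        simp only [ne_eq, Fin.mk.injEq]; omega
      have hne2 : (⟨2*m, by omega⟩ : Fin (2*m+2)) ≠ (⟨0, by omega⟩ : Fin (2*m+2)) := by
        simp only [ne_eq, Fin.mk.injEq]; omega
      simp only [map_add, map_smul, Finsupp.add_apply, Finsupp.smul_apply,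
        Module.Basis.repr_self, Finsupp.single_eq_same, Finsupp.single_eq_of_ne hne1.symm,
        Finsupp.single_eq_of_ne hne2.symm, smul_eq_mul, mul_one, mul_zero, add_zero] at h1
      exact hlam 0 (by omega) (mul_self_eq_zero.mp h1)
    obtain ⟨k0, hk0⟩ : ∃ k0, p = 2*k0+3 := by
      obtain ⟨r, hr⟩ := hp.odd_of_ne_two (by omega)
      exact ⟨r-1, by omega⟩
    set d : F := b.repr y ⟨2*m+1, by omega⟩ with hd
    have hlamd : ∀ i, i < m → lam i ^ (p-1) = d := by
      intro i hi
      have h0 := DFunLike.congr_fun hy1 (b ⟨i, by omega⟩)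
      have hh := (hpow (b ⟨2*m+1, by omega⟩) i hi (k0+1)).1
      rw [show 2*(k0+1)+1 = p from by omega, show 2*(k0+1) = p-1 from by omega] at hh
      rw [hh, hx1, hadz (b ⟨2*m+1, by omega⟩), BRj2 i hi, hadz y (b ⟨i, by omega⟩),
        hAdj y i hi] at h0
      have h1 := congrArg (fun w => b.repr w (⟨m+i, by omega⟩ : Fin (2*m+2))) h0
      have hne1 : (⟨2*m, by omega⟩ : Fin (2*m+2)) ≠ (⟨m+i, by omega⟩ : Fin (2*m+2)) := by
        simp only [ne_eq, Fin.mk.injEq]; omega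
      simp only [map_add, map_smul, Finsupp.add_apply, Finsupp.smul_apply,
        Module.Basis.repr_self, Finsupp.single_eq_same, Finsupp.single_eq_of_ne hne1.symm,
        smul_eq_mul, one_mul, mul_one, mul_zero, add_zero] at h1
      exact mul_right_cancel₀ (hlam i hi) h1
    have hkapd : ∀ j, j < n → kap j ^ (p-1) = d := by
      intro j hj
      set v0 : Fin (2*n+t) → F := Pi.single (⟨j+n, by omega⟩ : Fin (2*n+t)) 1 with hv0
      have h0 := congrFun (DFunLike.congr_fun hy2 v0) (⟨j, by omega⟩ : Fin (2*n+t))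
      rw [hRp k0 hk0 v0 j (by omega), if_pos hj, hrhoz y, ← hd, LinearMap.smul_apply,
        Pi.smul_apply, smul_eq_mul, hR1 v0 j (by omega), dif_pos hj] at h0
      have hv1 : v0 (⟨j+n, by omega⟩ : Fin (2*n+t)) = 1 := Pi.single_eq_same _ _
      simp only [hv1, mul_one] at h0
      exact mul_right_cancel₀ (hkap j hj) h0
    exact ⟨hp3, fun i hi j hj => (hlamd i hi).trans (hlamd j hj).symm,
      fun i hi j hj => (hkapd i hi).trans (hkapd j hj).symm,
      fun i hi j hj => (hlamd i hi).trans (hkapd j hj).symm⟩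
  · -- reverse direction
    rintro ⟨hp3, hll, hkk, hlk⟩ x
    have hp : Nat.Prime p := Fact.out
    obtain ⟨k0, hk0⟩ : ∃ k0, p = 2*k0+3 := by
      obtain ⟨r, hr⟩ := hp.odd_of_ne_two (by omega)
      exact ⟨r-1, by omega⟩
    -- notation
    set c : F := b.repr x ⟨2*m+1, by omega⟩ with hc
    set μ : F := lam 0 ^ (p-1) with hμ
    have hμl : ∀ j, j < m → lam j ^ (p-1) = μ := fun j hj => hll j hj 0 (by omega)
    have hμk : ∀ j, j < n → kap j ^ (p-1) = μ := fun j hj => (hlk 0 (by omega) j hj).symm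
    -- p-indexed power lemma
    have hpowp : ∀ (z : L) (j : ℕ) (hj : j < m),
        ((LieAlgebra.ad F L z)^p) (b ⟨j, by omega⟩)
          = ((b.repr z ⟨2*m+1, by omega⟩ * lam j)^(p-1)) • (LieAlgebra.ad F L z) (b ⟨j, by omega⟩)
        ∧ ((LieAlgebra.ad F L z)^p) (b ⟨m+j, by omega⟩)
          = ((b.repr z ⟨2*m+1, by omega⟩ * lam j)^(p-1)) • (LieAlgebra.ad F L z) (b ⟨m+j, by omega⟩) := by
      intro z j hj
      have h := hpow z j hj (k0+1)
      rw [show 2*(k0+1)+1 = p from by omega, show 2*(k0+1) = p-1 from by omega] at h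
      exact h
    use (μ * c^(p-1)) • x
    have hady : LieAlgebra.ad F L ((μ * c^(p-1)) • x) = (μ * c^(p-1)) • LieAlgebra.ad F L x :=
      (LieAlgebra.ad F L).map_smul _ _
    constructor
    · -- Lie algebra part
      rw [hady]
      refine b.ext fun i => ?_
      rcases i with ⟨iv, hi⟩
      rw [LinearMap.smul_apply]
      by_cases h1 : iv < m
      · rw [(hpowp x iv h1).1]
        congr 1
        rw [mul_pow, hμl iv h1, mul_comm]
      by_cases h2 : iv < 2*m
      · rw [show (⟨iv, hi⟩ : Fin (2*m+2)) = ⟨m+(iv-m), by omega⟩ from by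
          simp only [Fin.mk.injEq]; omega]
        rw [(hpowp x (iv-m) (by omega)).2]
        congr 1
        rw [mul_pow, hμl (iv-m) (by omega), mul_comm]
      by_cases h3 : iv = 2*m
      · rw [show (⟨iv, hi⟩ : Fin (2*m+2)) = ⟨2*m, by omega⟩ from by
          simp only [Fin.mk.injEq]; omega]
        rw [hA0 x, smul_zero, show p = (p-1)+1 from by omega, hpowc x (p-1)]
      -- iv = 2*m+1
      have h4 : iv = 2*m+1 := by omega
      rw [show (⟨iv, hi⟩ : Fin (2*m+2)) = ⟨2*m+1, by omega⟩ from by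
        simp only [Fin.mk.injEq]; omega]
      -- the twisting element
      set D : Module.End F L := LieAlgebra.ad F L (b ⟨2*m+1, by omega⟩) with hD
      set Vs : Submodule F L :=
        Submodule.span F {w : L | ∃ (j : ℕ) (_ : j < 2*m), w = b ⟨j, by omega⟩} with hVs
      have hDb : ∀ (z : L), D z = ⁅b ⟨2*m+1, by omega⟩, z⁆ := fun z => rfl
      have hDmem : ∀ z : L, D z ∈ Vs := by
        intro z
        rw [show z = ∑ i : Fin (2*m+2), b.repr z i • b i from (Module.Basis.sum_repr b z).symm, map_sum]
        refine Submodule.sum_mem _ fun i _ => ?_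
        rw [map_smul]
        refine Submodule.smul_mem _ _ ?_
        rcases i with ⟨iv', hi'⟩
        by_cases g1 : iv' < m
        · rw [hDb, BRj2 iv' g1]
          exact Submodule.smul_mem _ _ (Submodule.subset_span ⟨m+iv', by omega, rfl⟩)
        by_cases g2 : iv' < 2*m
        · rw [show (⟨iv', hi'⟩ : Fin (2*m+2)) = ⟨m+(iv'-m), by omega⟩ from by
            simp only [Fin.mk.injEq]; omega, hDb, BRk2 (iv'-m) (by omega)]
          exact Submodule.smul_mem _ _ (Submodule.subset_span ⟨iv'-m, by omega, rfl⟩)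
        by_cases g3 : iv' = 2*m
        · rw [show (⟨iv', hi'⟩ : Fin (2*m+2)) = ⟨2*m, by omega⟩ from by
            simp only [Fin.mk.injEq]; omega, hDb, BRc]
          exact Submodule.zero_mem _
        · rw [show (⟨iv', hi'⟩ : Fin (2*m+2)) = ⟨2*m+1, by omega⟩ from by
            simp only [Fin.mk.injEq]; omega, hDb, lie_self]
          exact Submodule.zero_mem _
      have hVbr : ∀ v ∈ Vs, ∃ γ : F, ⁅x, v⁆ = c • (D v) + γ • b ⟨2*m, by omega⟩ := by
        intro v hv
        induction hv using Submodule.span_induction with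
        | mem w hw =>
          obtain ⟨j, hj, rfl⟩ := hw
          by_cases g1 : j < m
          · refine ⟨-(b.repr x ⟨m+j, by omega⟩), ?_⟩
            rw [hAdj x j g1, hDb, BRj2 j g1, smul_smul]
          · refine ⟨b.repr x ⟨j-m, by omega⟩, ?_⟩
            rw [show (⟨j, by omega⟩ : Fin (2*m+2)) = ⟨m+(j-m), by omega⟩ from by
              simp only [Fin.mk.injEq]; omega]
            rw [hAdk x (j-m) (by omega), hDb, BRk2 (j-m) (by omega), smul_smul]
        | zero => exact ⟨0, by simp⟩
        | add w1 w2 hw1 hw2 ih1 ih2 =>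
          obtain ⟨γ1, e1⟩ := ih1
          obtain ⟨γ2, e2⟩ := ih2
          refine ⟨γ1 + γ2, ?_⟩
          rw [lie_add, e1, e2, map_add, smul_add, add_smul]
          abel
        | smul r w hw ih =>
          obtain ⟨γ, e⟩ := ih
          refine ⟨r * γ, ?_⟩
          rw [lie_smul, e, map_smul, smul_add, smul_smul, smul_smul, smul_smul,
            mul_comm r c]
      have hxlast : ⁅x, b ⟨2*m+1, by omega⟩⁆ = -(D x) := by
        rw [hDb, ← lie_skew]
      have hE3 : ∀ k : ℕ, ((LieAlgebra.ad F L x)^(k+2)) (b ⟨2*m+1, by omega⟩)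
          = (-(c^k)) • ⁅x, (D^(k+1)) x⁆ := by
        intro k
        induction k with
        | zero =>
          rw [pow_succ, pow_one, Module.End.mul_apply, hadz, hadz, hxlast, lie_neg, pow_one,
            pow_zero, neg_smul, one_smul]
        | succ k ih =>
          rw [show k+1+2 = (k+2)+1 from by ring, pow_succ', Module.End.mul_apply, ih, map_smul]
          obtain ⟨γ, hγ⟩ := hVbr ((D^(k+1)) x) (by
            rw [pow_succ', Module.End.mul_apply]
            exact hDmem _)
          rw [hadz, hγ, lie_add, lie_smul, lie_smul, hAdc x, smul_zero, add_zero,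
            show D ((D^(k+1)) x) = (D^(k+1+1)) x from by
              rw [pow_succ' D (k+1), Module.End.mul_apply],
            smul_smul]
          congr 1
          ring
      have hDeven : ∀ (j : ℕ) (hj : j < m) (k : ℕ),
          (D^(2*k)) (b ⟨j, by omega⟩) = (lam j)^(2*k) • b ⟨j, by omega⟩
          ∧ (D^(2*k)) (b ⟨m+j, by omega⟩) = (lam j)^(2*k) • b ⟨m+j, by omega⟩ := by
        intro j hj k
        induction k with
        | zero => simp
        | succ k ih =>
          have hst : ∀ w : L, (D^(2*(k+1))) w = D (D ((D^(2*k)) w)) := by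
            intro w
            rw [show 2*(k+1) = (2*k+1)+1 from by ring, pow_succ', Module.End.mul_apply,
              pow_succ', Module.End.mul_apply]
          constructor
          · rw [hst, ih.1, map_smul, map_smul, hDb, hDb, BRj2 j hj, lie_smul, BRk2 j hj,
              smul_smul, smul_smul]
            congr 1
            ring
          · rw [hst, ih.2, map_smul, map_smul, hDb, hDb, BRk2 j hj, lie_smul, BRj2 j hj,
              smul_smul, smul_smul]
            congr 1
            ring
      have hDbig : ∀ (i : Fin (2*m+2)),
          (D^(p-1)) (b i) = (if i.1 < 2*m then μ • b i else 0) := by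
        intro i
        rcases i with ⟨iv', hi'⟩
        by_cases g1 : iv' < m
        · rw [if_pos (by omega : iv' < 2*m)]
          have hh := (hDeven iv' g1 (k0+1)).1
          rw [show 2*(k0+1) = p-1 from by omega] at hh
          rw [hh, hμl iv' g1]
        by_cases g2 : iv' < 2*m
        · rw [if_pos (by omega : iv' < 2*m), show (⟨iv', hi'⟩ : Fin (2*m+2)) = ⟨m+(iv'-m), by omega⟩
            from by simp only [Fin.mk.injEq]; omega]
          have hh := (hDeven (iv'-m) (by omega) (k0+1)).2
          rw [show 2*(k0+1) = p-1 from by omega] at hh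
          rw [hh, hμl (iv'-m) (by omega)]
        by_cases g3 : iv' = 2*m
        · rw [if_neg (by simp; omega), show (⟨iv', hi'⟩ : Fin (2*m+2)) = ⟨2*m, by omega⟩ from by
            simp only [Fin.mk.injEq]; omega, show p-1 = (p-2)+1 from by omega]
          exact hpowc (b ⟨2*m+1, by omega⟩) (p-2)
        · rw [if_neg (by simp; omega), show (⟨iv', hi'⟩ : Fin (2*m+2)) = ⟨2*m+1, by omega⟩ from by
            simp only [Fin.mk.injEq]; omega, show p-1 = (p-2)+1 from by omega, pow_succ,
            Module.End.mul_apply, hDb, lie_self, map_zero]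
      have hDx : (D^(p-1)) x = μ • (x - (b.repr x ⟨2*m, by omega⟩) • b ⟨2*m, by omega⟩
          - c • b ⟨2*m+1, by omega⟩) := by
        have h1 : (D^(p-1)) x = ∑ i : Fin (2*m+2), b.repr x i • (D^(p-1)) (b i) := by
          conv_lhs => rw [show x = ∑ i : Fin (2*m+2), b.repr x i • b i
            from (Module.Basis.sum_repr b x).symm]
          rw [map_sum]
          exact Finset.sum_congr rfl fun i _ => by rw [map_smul]
        have h3 : ∀ i : Fin (2*m+2), b.repr x i • (D^(p-1)) (b i)
            = b.repr x i • (μ • b i)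
              - (if i = ⟨2*m, by omega⟩ then (b.repr x ⟨2*m, by omega⟩) • (μ • b ⟨2*m, by omega⟩)
                  else 0)
              - (if i = ⟨2*m+1, by omega⟩ then
                  (b.repr x ⟨2*m+1, by omega⟩) • (μ • b ⟨2*m+1, by omega⟩) else 0) := by
          intro i
          rcases i with ⟨iv', hi'⟩
          rw [hDbig]
          by_cases g1 : iv' < 2*m
          · rw [if_pos g1, if_neg (by simp only [Fin.mk.injEq]; omega),
              if_neg (by simp only [Fin.mk.injEq]; omega), sub_zero, sub_zero]
          by_cases g2 : iv' = 2*m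
          · rw [show (⟨iv', hi'⟩ : Fin (2*m+2)) = ⟨2*m, by omega⟩ from by
              simp only [Fin.mk.injEq]; omega]
            rw [if_neg (by simp), if_pos rfl, if_neg (by simp only [Fin.mk.injEq]; omega)]
            simp
          · rw [show (⟨iv', hi'⟩ : Fin (2*m+2)) = ⟨2*m+1, by omega⟩ from by
              simp only [Fin.mk.injEq]; omega]
            rw [if_neg (by simp), if_neg (by simp only [Fin.mk.injEq]; omega), if_pos rfl]
            simp
        have h4 : ∑ i : Fin (2*m+2), b.repr x i • (μ • b i) = μ • x := by
          calc ∑ i : Fin (2*m+2), b.repr x i • (μ • b i)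
              = ∑ i : Fin (2*m+2), μ • (b.repr x i • b i) :=
                Finset.sum_congr rfl fun i _ => smul_comm _ _ _
            _ = μ • ∑ i : Fin (2*m+2), b.repr x i • b i := Finset.smul_sum.symm
            _ = μ • x := by rw [Module.Basis.sum_repr]
        rw [h1, Finset.sum_congr rfl fun i _ => h3 i, Finset.sum_sub_distrib,
          Finset.sum_sub_distrib, Finset.sum_ite_eq' Finset.univ, Finset.sum_ite_eq' Finset.univ,
          if_pos (Finset.mem_univ _), if_pos (Finset.mem_univ _), h4, ← hc]
        module
      
      have hxu : ⁅x, x - (b.repr x ⟨2*m, by omega⟩) • b ⟨2*m, by omega⟩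
          - c • b ⟨2*m+1, by omega⟩⁆ = c • D x := by
        rw [lie_sub, lie_sub, lie_smul, lie_smul, lie_self, hAdc x, hxlast, smul_zero,
          smul_neg]
        abel
      have hfin := hE3 (p-2)
      rw [show (p-2)+2 = p from by omega, show (p-2)+1 = p-1 from by omega] at hfin
      rw [hfin, hDx, lie_smul, hxu, smul_smul, smul_smul,
        hadz x (b ⟨2*m+1, by omega⟩), hxlast, smul_neg, ← neg_smul]
      congr 1
      rw [show p-1 = (p-2)+1 from by omega, pow_succ]
      ring
    · -- representation part
      rw [map_smul ρ, hrhoz x, ← hc, smul_pow]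
      have hcp : c^p = c^(p-1) * c := by
        rw [← pow_succ]
        congr 1
        omega
      refine LinearMap.ext fun v => funext fun j => ?_
      rcases j with ⟨jv, hj⟩
      rw [LinearMap.smul_apply, LinearMap.smul_apply, LinearMap.smul_apply, Pi.smul_apply,
        Pi.smul_apply, Pi.smul_apply, smul_eq_mul, smul_eq_mul, smul_eq_mul,
        hRp k0 hk0 v jv hj]
      by_cases g1 : jv < n
      · rw [if_pos g1, hμk jv g1, hcp]
        ring
      by_cases g2 : jv < 2*n
      · rw [if_neg g1, if_pos g2, hμk (jv-n) (by omega), hcp]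
        ring
      · rw [if_neg g1, if_neg g2, hR1 v jv hj, dif_neg g1, dif_neg g2]
        ring
end

section
/- Let F be an algebraically closed field of characteristic p > 2, let m,n,t ≥ 1, and let λ_i, κ_j ∈ F be nonzero. In the twisted Heisenberg Lie superalgebra V = L ⊕ W, the linear span of all bracket values [x,y] (x, y ranging over V) equals span{e_1,…,e_{2m+1}, ω_1,…,ω_{2n}}. Consequently the space of 1-cocycles {F-linear ψ : V → F with ψ([x,y]) = 0 for all x,y ∈ V} has even part of dimension 1, spanned by the dual functional e^{2m+2}, and odd part of dimension t, spanned by the dual functionals η^1,…,η^t; that is, sdim H¹(h^{λ,κ}_{m,n,t}) = (1, t). -/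
attribute [local instance 100] LieRing.ofAssociativeRing

set_option maxHeartbeats 4000000 in
/-- In the twisted Heisenberg Lie superalgebra `V = L ⊕ W`
(characteristic `p > 2`, `m,n,t ≥ 1`, all `λ_i, κ_j ≠ 0`; everything 0-indexed:
`e 0,…,e (2m+1)` a basis of `L` with `e (2*m+1)` the paper's `e_{2m+2}`,
`W = F^{2n+t}` with coordinates `0,…,2n-1` the `ω`'s and `2n,…,2n+t-1` the `η`'s,
super bracket `Br (x,u) (y,v) = ([x,y] + Γ(u,v), ρ(x)v − ρ(y)u)`), the span of all
bracket values equals `span{e 0,…,e (2m), ω_1,…,ω_{2n}}`; consequently the even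
1-cocycles form the 1-dimensional span of the dual functional `e^{2m+2}` and the
odd 1-cocycles form the `t`-dimensional span of `η^1,…,η^t`:
`sdim H¹(h^{λ,κ}_{m,n,t}) = (1,t)`. -/
theorem stmt_5
    (F : Type*) [Field F] [IsAlgClosed F]
    (p : ℕ) [Fact (Nat.Prime p)] [CharP F p] (hp2 : 2 < p)
    (m n t : ℕ) (hm : 1 ≤ m) (hn : 1 ≤ n) (ht : 1 ≤ t)
    (lam kap : ℕ → F) (hlam : ∀ i, i < m → lam i ≠ 0) (hkap : ∀ j, j < n → kap j ≠ 0)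
    (L : Type*) [LieRing L] [LieAlgebra F L]
    (b : Module.Basis (Fin (2*m+2)) F L)
    (e : ℕ → L) (he : ∀ i : Fin (2*m+2), e (i : ℕ) = b i)
    (hbr : ∀ i j : ℕ, i < 2*m+2 → j < 2*m+2 →
      ⁅e i, e j⁆ =
        if i < m ∧ j = m + i then e (2*m)
        else if j < m ∧ i = m + j then - e (2*m)
        else if i = 2*m+1 ∧ j < m then lam j • e (m + j)
        else if i = 2*m+1 ∧ m ≤ j ∧ j < 2*m then lam (j-m) • e (j-m)
        else if j = 2*m+1 ∧ i < m then - (lam i • e (m + i))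
        else if j = 2*m+1 ∧ m ≤ i ∧ i < 2*m then - (lam (i-m) • e (i-m))
        else 0)
    (ρ : L →ₗ⁅F⁆ Module.End F (Fin (2*n+t) → F))
    (hρ0 : ∀ i, i < 2*m+1 → ρ (e i) = 0)
    (hρ1 : ∀ (v : Fin (2*n+t) → F) (i : Fin (2*n+t)),
      ρ (e (2*m+1)) v i =
        if h1 : (i : ℕ) < n then kap i * v ⟨(i : ℕ) + n, by omega⟩
        else if h2 : (i : ℕ) < 2*n then
          kap ((i : ℕ) - n) * v ⟨(i : ℕ) - n, by have := i.isLt; omega⟩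
        else 0)
    (Br : L × (Fin (2*n+t) → F) → L × (Fin (2*n+t) → F) → L × (Fin (2*n+t) → F))
    (hBr : ∀ (x y : L) (u v : Fin (2*n+t) → F),
      Br (x, u) (y, v) =
        (⁅x, y⁆ +
          ((∑ j : Fin n, u ⟨(j : ℕ), by have := j.isLt; omega⟩
              * v ⟨(j : ℕ), by have := j.isLt; omega⟩)
           - (∑ j : Fin n, u ⟨n + (j : ℕ), by have := j.isLt; omega⟩
              * v ⟨n + (j : ℕ), by have := j.isLt; omega⟩)
           + (∑ k : Fin t, u ⟨2*n + (k : ℕ), by have := k.isLt; omega⟩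
              * v ⟨2*n + (k : ℕ), by have := k.isLt; omega⟩)) • e (2*m),
         ρ x v - ρ y u)) :
    -- the span of all bracket values:
    (Submodule.span F {z : L × (Fin (2*n+t) → F) | ∃ x y, z = Br x y}
      = Submodule.span F
          ((fun i : ℕ => ((e i, 0) : L × (Fin (2*n+t) → F))) '' {i | i < 2*m+1}
            ∪ (fun j : Fin (2*n+t) =>
                ((0, Pi.single j 1) : L × (Fin (2*n+t) → F))) '' {j | (j : ℕ) < 2*n}))
    -- even 1-cocycles = F · e^{2m+2}, a 1-dimensional space:
    ∧ ({ψ : (L × (Fin (2*n+t) → F)) →ₗ[F] F |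
          (∀ x y, ψ (Br x y) = 0) ∧ ∀ w : Fin (2*n+t) → F, ψ (0, w) = 0}
        = Set.range (fun c : F => c •
            ((b.coord ⟨2*m+1, by omega⟩).comp
              (LinearMap.fst F L (Fin (2*n+t) → F)))))
    ∧ ((b.coord ⟨2*m+1, by omega⟩).comp (LinearMap.fst F L (Fin (2*n+t) → F)) ≠ 0)
    -- odd 1-cocycles = span of the η^k, a t-dimensional space:
    ∧ ({ψ : (L × (Fin (2*n+t) → F)) →ₗ[F] F |
          (∀ x y, ψ (Br x y) = 0) ∧ ∀ x : L, ψ (x, 0) = 0}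
        = ↑(Submodule.span F (Set.range (fun k : Fin t =>
            (LinearMap.proj (R := F) (φ := fun _ : Fin (2*n+t) => F)
                ⟨2*n + (k : ℕ), by have := k.isLt; omega⟩).comp
              (LinearMap.snd F L (Fin (2*n+t) → F))))))
    ∧ LinearIndependent F (fun k : Fin t =>
        (LinearMap.proj (R := F) (φ := fun _ : Fin (2*n+t) => F)
            ⟨2*n + (k : ℕ), by have := k.isLt; omega⟩).comp
          (LinearMap.snd F L (Fin (2*n+t) → F))) := by
  
  classical
  -- notation
  set S : Set (L × (Fin (2*n+t) → F)) := {z | ∃ x y, z = Br x y} with hSdef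
  set G : Set (L × (Fin (2*n+t) → F)) :=
      ((fun i : ℕ => ((e i, 0) : L × (Fin (2*n+t) → F))) '' {i | i < 2*m+1}
        ∪ (fun j : Fin (2*n+t) =>
            ((0, Pi.single j 1) : L × (Fin (2*n+t) → F))) '' {j | (j : ℕ) < 2*n}) with hGdef
  have heB : ∀ (i : ℕ) (h : i < 2*m+2), e i = b ⟨i, h⟩ := fun i h => he ⟨i, h⟩
  -- coordinate (2m+1) of basis vectors and of e i for i < 2m+1 vanishes
  have hne : ∀ i : Fin (2*m+2), (i : ℕ) < 2*m+1 → b.coord ⟨2*m+1, by omega⟩ (b i) = 0 := by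
    intro i hi
    simp only [Module.Basis.coord_apply, Module.Basis.repr_self, Finsupp.single_apply]
    rw [if_neg]
    simp only [Fin.ext_iff]
    omega
  have hcoordE : ∀ i : ℕ, i < 2*m+1 → b.coord ⟨2*m+1, by omega⟩ (e i) = 0 := by
    intro i hi
    rw [heB i (by omega)]
    exact hne ⟨i, by omega⟩ hi
  -- the last coordinate kills all brackets
  have hcoord_br : ∀ x y : L, b.coord ⟨2*m+1, by omega⟩ ⁅x, y⁆ = 0 := by
    have key : ∀ i j : Fin (2*m+2), b.coord ⟨2*m+1, by omega⟩ ⁅b i, b j⁆ = 0 := by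
      intro i j
      have h1 : ⁅b i, b j⁆ = ⁅e (i : ℕ), e (j : ℕ)⁆ := by rw [he i, he j]
      rw [h1, hbr (i : ℕ) (j : ℕ) i.isLt j.isLt]
      split_ifs with h1 h2 h3 h4 h5 h6
      · exact hcoordE _ (by omega)
      · rw [map_neg, hcoordE _ (by omega), neg_zero]
      · rw [map_smul, hcoordE _ (by omega), smul_zero]
      · rw [map_smul, hcoordE _ (by omega), smul_zero]
      · rw [map_neg, map_smul, hcoordE _ (by omega), smul_zero, neg_zero]
      · rw [map_neg, map_smul, hcoordE _ (by omega), smul_zero, neg_zero]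
      · simp
    let f : L →ₗ[F] L →ₗ[F] F := LinearMap.mk₂ F
      (fun x y => b.coord ⟨2*m+1, by omega⟩ ⁅x, y⁆)
      (by intros; simp [add_lie]) (by intros; simp [smul_lie])
      (by intros; simp [lie_add]) (by intros; simp [lie_smul])
    have hf : f = 0 := by
      apply b.ext; intro i
      apply b.ext; intro j
      simpa [f] using key i j
    intro x y
    have h0 : f x y = 0 := by rw [hf]; simp
    exact h0
  -- ρ vanishes on high coordinates
  have hρ_high : ∀ (x : L) (v : Fin (2*n+t) → F) (j : Fin (2*n+t)),
      2*n ≤ (j : ℕ) → (ρ x) v j = 0 := by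
    intro x v j hj
    let g : L →ₗ[F] F := (LinearMap.proj j).comp
      ((LinearMap.applyₗ v).comp (ρ : L →ₗ[F] Module.End F (Fin (2*n+t) → F)))
    have hg : g = 0 := by
      apply b.ext; intro i
      have hgi : g (b i) = (ρ (b i)) v j := rfl
      rw [LinearMap.zero_apply, hgi, ← he i]
      by_cases hi : (i : ℕ) < 2*m+1
      · rw [hρ0 _ hi]; simp
      · have hieq : (i : ℕ) = 2*m+1 := by have := i.isLt; omega
        rw [hieq, hρ1 v j, dif_neg (by omega), dif_neg (by omega)]
    have h0 : g x = 0 := by rw [hg]; simp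
    exact h0
  -- brackets with zero odd parts
  have hBrL : ∀ x y : L, Br (x, 0) (y, 0) = (⁅x, y⁆, 0) := by
    intro x y
    rw [hBr]
    simp
  -- generators of G are in span S
  have gen1 : ∀ i : ℕ, i < 2*m+1 →
      ((e i, 0) : L × (Fin (2*n+t) → F)) ∈ Submodule.span F S := by
    intro i hi
    rcases lt_or_ge i (2*m) with hi2 | hi2
    · rcases lt_or_ge i m with him | him
      · have hb : Br ((e (2*m+1), 0) : L × (Fin (2*n+t) → F)) (e (m+i), 0)
            = (lam i • e i, 0) := by
          rw [hBrL, hbr (2*m+1) (m+i) (by omega) (by omega)]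
          rw [if_neg (by omega), if_neg (by omega), if_neg (by omega), if_pos (by omega)]
          rw [Nat.add_sub_cancel_left]
        have hkey : ((e i, 0) : L × (Fin (2*n+t) → F))
            = (lam i)⁻¹ • ((lam i • e i, (0 : Fin (2*n+t) → F)) : L × (Fin (2*n+t) → F)) := by
          rw [Prod.smul_mk, smul_smul, inv_mul_cancel₀ (hlam i him), one_smul, smul_zero]
        rw [hkey, ← hb]
        exact Submodule.smul_mem _ _ (Submodule.subset_span ⟨_, _, rfl⟩)
      · have hb : Br ((e (2*m+1), 0) : L × (Fin (2*n+t) → F)) (e (i-m), 0)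
            = (lam (i-m) • e i, 0) := by
          rw [hBrL, hbr (2*m+1) (i-m) (by omega) (by omega)]
          rw [if_neg (by omega), if_neg (by omega), if_pos (by omega)]
          rw [show m + (i - m) = i by omega]
        have hkey : ((e i, 0) : L × (Fin (2*n+t) → F))
            = (lam (i-m))⁻¹ • ((lam (i-m) • e i, (0 : Fin (2*n+t) → F)) : L × (Fin (2*n+t) → F)) := by
          rw [Prod.smul_mk, smul_smul, inv_mul_cancel₀ (hlam (i-m) (by omega)), one_smul, smul_zero]
        rw [hkey, ← hb]
        exact Submodule.smul_mem _ _ (Submodule.subset_span ⟨_, _, rfl⟩)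
    · have hieq : i = 2*m := by omega
      subst hieq
      have hb : Br ((e 0, 0) : L × (Fin (2*n+t) → F)) (e m, 0) = (e (2*m), 0) := by
        rw [hBrL, hbr 0 m (by omega) (by omega), if_pos (by omega)]
      rw [← hb]
      exact Submodule.subset_span ⟨_, _, rfl⟩
  have gen2 : ∀ j : Fin (2*n+t), (j : ℕ) < 2*n →
      ((0, Pi.single j 1) : L × (Fin (2*n+t) → F)) ∈ Submodule.span F S := by
    intro j hj
    rcases lt_or_ge (j : ℕ) n with hjn | hjn
    · have hb : Br ((e (2*m+1), 0) : L × (Fin (2*n+t) → F))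
          (0, Pi.single ⟨(j : ℕ) + n, by omega⟩ 1)
          = ((0 : L), (kap (j : ℕ) • (Pi.single j 1 : Fin (2*n+t) → F))) := by
        rw [hBr]
        refine Prod.ext ?_ ?_
        · simp
        · show ρ (e (2*m+1)) (Pi.single ⟨(j : ℕ) + n, by omega⟩ 1) - ρ 0 (0 : Fin (2*n+t) → F) = _
          rw [map_zero]
          simp only [LinearMap.zero_apply, sub_zero]
          funext i
          rw [hρ1]
          rcases lt_or_ge (i : ℕ) n with h1 | h1
          · rw [dif_pos h1]
            simp only [Pi.single_apply, Pi.smul_apply, smul_eq_mul, Fin.mk.injEq, Fin.ext_iff]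
            by_cases hij : (i : ℕ) = (j : ℕ)
            · rw [if_pos (by omega), if_pos (by omega), hij]
            · rw [if_neg (by omega), if_neg (by omega)]
              ring
          · rw [dif_neg (by omega)]
            by_cases h2 : (i : ℕ) < 2*n
            · rw [dif_pos h2]
              simp only [Pi.single_apply, Pi.smul_apply, smul_eq_mul, Fin.mk.injEq, Fin.ext_iff]
              rw [if_neg (by omega), if_neg (by omega)]
              ring
            · rw [dif_neg h2]
              simp only [Pi.single_apply, Pi.smul_apply, smul_eq_mul, Fin.mk.injEq, Fin.ext_iff]
              rw [if_neg (by omega)]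
              ring
      have hkey : ((0, Pi.single j 1) : L × (Fin (2*n+t) → F))
          = (kap (j : ℕ))⁻¹ • (((0 : L), kap (j : ℕ) • (Pi.single j 1 : Fin (2*n+t) → F)) : L × (Fin (2*n+t) → F)) := by
        rw [Prod.smul_mk, smul_zero, smul_smul, inv_mul_cancel₀ (hkap _ hjn), one_smul]
      rw [hkey, ← hb]
      exact Submodule.smul_mem _ _ (Submodule.subset_span ⟨_, _, rfl⟩)
    · have hb : Br ((e (2*m+1), 0) : L × (Fin (2*n+t) → F))
          (0, Pi.single ⟨(j : ℕ) - n, by omega⟩ 1)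
          = ((0 : L), (kap ((j : ℕ) - n) • (Pi.single j 1 : Fin (2*n+t) → F))) := by
        rw [hBr]
        refine Prod.ext ?_ ?_
        · simp
        · show ρ (e (2*m+1)) (Pi.single ⟨(j : ℕ) - n, by omega⟩ 1) - ρ 0 (0 : Fin (2*n+t) → F) = _
          rw [map_zero]
          simp only [LinearMap.zero_apply, sub_zero]
          funext i
          rw [hρ1]
          rcases lt_or_ge (i : ℕ) n with h1 | h1
          · rw [dif_pos h1]
            simp only [Pi.single_apply, Pi.smul_apply, smul_eq_mul, Fin.mk.injEq, Fin.ext_iff]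
            rw [if_neg (by omega), if_neg (by omega)]
            ring
          · rw [dif_neg (by omega)]
            by_cases h2 : (i : ℕ) < 2*n
            · rw [dif_pos h2]
              simp only [Pi.single_apply, Pi.smul_apply, smul_eq_mul, Fin.mk.injEq, Fin.ext_iff]
              by_cases hij : (i : ℕ) = (j : ℕ)
              · rw [if_pos (by omega), if_pos (by omega),
                  show (i : ℕ) - n = (j : ℕ) - n by omega]
              · rw [if_neg (by omega), if_neg (by omega)]
                ring
            · rw [dif_neg h2]
              simp only [Pi.single_apply, Pi.smul_apply, smul_eq_mul, Fin.mk.injEq, Fin.ext_iff]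
              rw [if_neg (by omega)]
              ring
      have hkey : ((0, Pi.single j 1) : L × (Fin (2*n+t) → F))
          = (kap ((j : ℕ) - n))⁻¹ •
            (((0 : L), kap ((j : ℕ) - n) • (Pi.single j 1 : Fin (2*n+t) → F)) : L × (Fin (2*n+t) → F)) := by
        rw [Prod.smul_mk, smul_zero, smul_smul, inv_mul_cancel₀ (hkap _ (by omega)), one_smul]
      rw [hkey, ← hb]
      exact Submodule.smul_mem _ _ (Submodule.subset_span ⟨_, _, rfl⟩)
  -- span G ≤ span S
  have hGS : Submodule.span F G ≤ Submodule.span F S := by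
    rw [Submodule.span_le]
    rintro z (⟨i, hi, rfl⟩ | ⟨j, hj, rfl⟩)
    · exact gen1 i hi
    · exact gen2 j hj
  -- membership criterion for span G
  have hKmem : ∀ (a : L) (w : Fin (2*n+t) → F),
      b.coord ⟨2*m+1, by omega⟩ a = 0 → (∀ j : Fin (2*n+t), 2*n ≤ (j : ℕ) → w j = 0) →
      ((a, w) : L × (Fin (2*n+t) → F)) ∈ Submodule.span F G := by
    intro a w ha hw
    have h1 : ((a, 0) : L × (Fin (2*n+t) → F)) ∈ Submodule.span F G := by
      have haspan : a ∈ Submodule.span F (⇑b '' {i : Fin (2*m+2) | (i : ℕ) < 2*m+1}) := by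
        rw [Module.Basis.mem_span_image]
        intro i hi
        rw [Finset.mem_coe, Finsupp.mem_support_iff] at hi
        show (i : ℕ) < 2*m+1
        by_contra hc
        have hieq : i = ⟨2*m+1, by omega⟩ := Fin.ext (show (i : ℕ) = 2*m+1 by have := i.isLt; omega)
        rw [hieq] at hi
        exact hi (by rw [← Module.Basis.coord_apply]; exact ha)
      have hmap := Submodule.mem_map_of_mem
        (f := LinearMap.inl F L (Fin (2*n+t) → F)) haspan
      rw [Submodule.map_span] at hmap
      have hsub : ⇑(LinearMap.inl F L (Fin (2*n+t) → F)) ''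
          (⇑b '' {i : Fin (2*m+2) | (i : ℕ) < 2*m+1}) ⊆ G := by
        rintro z ⟨z', ⟨i, hi, rfl⟩, rfl⟩
        exact Or.inl ⟨(i : ℕ), hi, by simp [he i]⟩
      exact Submodule.span_mono hsub hmap
    have h2 : (((0 : L), w) : L × (Fin (2*n+t) → F)) ∈ Submodule.span F G := by
      have hwspan : w ∈ Submodule.span F
          (⇑(Pi.basisFun F (Fin (2*n+t))) '' {j : Fin (2*n+t) | (j : ℕ) < 2*n}) := by
        rw [Module.Basis.mem_span_image]
        intro j hj
        rw [Finset.mem_coe, Finsupp.mem_support_iff, Pi.basisFun_repr] at hj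
        show (j : ℕ) < 2*n
        by_contra hc
        exact hj (hw j (by omega))
      have hmap := Submodule.mem_map_of_mem
        (f := LinearMap.inr F L (Fin (2*n+t) → F)) hwspan
      rw [Submodule.map_span] at hmap
      have hsub : ⇑(LinearMap.inr F L (Fin (2*n+t) → F)) ''
          (⇑(Pi.basisFun F (Fin (2*n+t))) '' {j : Fin (2*n+t) | (j : ℕ) < 2*n}) ⊆ G := by
        rintro z ⟨z', ⟨j, hj, rfl⟩, rfl⟩
        exact Or.inr ⟨j, hj, by simp [Pi.basisFun_apply]⟩
      exact Submodule.span_mono hsub hmap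
    have hsum : ((a, w) : L × (Fin (2*n+t) → F)) = (a, 0) + (0, w) := by simp
    rw [hsum]
    exact Submodule.add_mem _ h1 h2
  -- span S ≤ span G
  have hSG : Submodule.span F S ≤ Submodule.span F G := by
    rw [Submodule.span_le]
    rintro z ⟨x, y, rfl⟩
    obtain ⟨x1, x2⟩ := x; obtain ⟨y1, y2⟩ := y
    rw [hBr]
    apply hKmem
    · rw [map_add, hcoord_br x1 y1, map_smul, hcoordE (2*m) (by omega), smul_zero, add_zero]
    · intro j hj
      show (ρ x1) y2 j - (ρ y1) x2 j = 0
      rw [hρ_high x1 y2 j hj, hρ_high y1 x2 j hj, sub_zero]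
  -- cocycles vanish on span S
  have hψspan : ∀ (ψ : (L × (Fin (2*n+t) → F)) →ₗ[F] F), (∀ x y, ψ (Br x y) = 0) →
      ∀ z ∈ Submodule.span F S, ψ z = 0 := by
    intro ψ hψ z hz
    have hle : Submodule.span F S ≤ LinearMap.ker ψ := by
      rw [Submodule.span_le]
      rintro z' ⟨x, y, rfl⟩
      exact hψ x y
    exact hle hz
  refine ⟨le_antisymm hSG hGS, ?_, ?_, ?_, ?_⟩
  · -- even cocycles
    ext ψ
    simp only [Set.mem_setOf_eq, Set.mem_range]
    constructor
    · rintro ⟨hc, hW⟩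
      refine ⟨ψ (b ⟨2*m+1, by omega⟩, 0), ?_⟩
      apply LinearMap.prod_ext
      · apply b.ext
        intro i
        simp only [LinearMap.comp_apply, LinearMap.inl_apply, LinearMap.smul_apply,
          smul_eq_mul, LinearMap.fst_apply]
        by_cases hi : (i : ℕ) < 2*m+1
        · rw [hne i hi, mul_zero]
          have hbi : ψ ((b i, 0) : L × (Fin (2*n+t) → F)) = ψ (e (i : ℕ), 0) := by rw [he i]
          rw [hbi]
          exact (hψspan ψ hc _ (gen1 (i : ℕ) hi)).symm
        · have hieq : i = ⟨2*m+1, by omega⟩ := Fin.ext (show (i : ℕ) = 2*m+1 by have := i.isLt; omega)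
          rw [hieq]
          simp [Module.Basis.coord_apply, Module.Basis.repr_self]
      · apply LinearMap.ext
        intro w
        simp only [LinearMap.comp_apply, LinearMap.inr_apply, LinearMap.smul_apply,
          smul_eq_mul, LinearMap.fst_apply]
        rw [map_zero, mul_zero]
        exact (hW w).symm
    · rintro ⟨c, rfl⟩
      constructor
      · intro x y
        obtain ⟨x1, x2⟩ := x; obtain ⟨y1, y2⟩ := y
        rw [hBr]
        simp only [LinearMap.smul_apply, smul_eq_mul, LinearMap.comp_apply, LinearMap.fst_apply]
        rw [map_add, hcoord_br x1 y1, map_smul, hcoordE (2*m) (by omega), smul_zero,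
          add_zero, mul_zero]
      · intro w
        simp
  · -- nonvanishing of the dual functional
    intro hcon
    have hev := LinearMap.congr_fun hcon ((b ⟨2*m+1, by omega⟩, 0) : L × (Fin (2*n+t) → F))
    simp [Module.Basis.coord_apply, Module.Basis.repr_self] at hev
  · -- odd cocycles
    ext ψ
    simp only [Set.mem_setOf_eq, SetLike.mem_coe]
    constructor
    · rintro ⟨hc, hL⟩
      rw [Submodule.mem_span_range_iff_exists_fun]
      refine ⟨fun k => ψ (0, Pi.single ⟨2*n + (k : ℕ), by omega⟩ 1), ?_⟩
      apply LinearMap.prod_ext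
      · apply LinearMap.ext
        intro x
        simp only [LinearMap.comp_apply, LinearMap.inl_apply, LinearMap.sum_apply,
          LinearMap.smul_apply, smul_eq_mul, LinearMap.snd_apply, LinearMap.proj_apply]
        rw [hL x]
        simp
      · apply (Pi.basisFun F (Fin (2*n+t))).ext
        intro j
        simp only [Pi.basisFun_apply, LinearMap.comp_apply, LinearMap.inr_apply,
          LinearMap.sum_apply, LinearMap.smul_apply, smul_eq_mul, LinearMap.snd_apply,
          LinearMap.proj_apply]
        by_cases hj : (j : ℕ) < 2*n
        · rw [show ψ ((0, Pi.single j 1) : L × (Fin (2*n+t) → F)) = 0 from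
            hψspan ψ hc _ (gen2 j hj)]
          apply Finset.sum_eq_zero
          intro k _
          rw [Pi.single_apply, if_neg (by simp only [Fin.ext_iff]; omega), mul_zero]
        · obtain ⟨k0, hk0⟩ : ∃ k : Fin t, (j : ℕ) = 2*n + (k : ℕ) :=
            ⟨⟨(j : ℕ) - 2*n, by have := j.isLt; omega⟩, show (j : ℕ) = 2*n + ((j : ℕ) - 2*n) by omega⟩
          have hjeq : j = ⟨2*n + (k0 : ℕ), by omega⟩ := Fin.ext hk0
          rw [hjeq]
          rw [Finset.sum_eq_single k0 (fun k _ hk => by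
              rw [Pi.single_apply, if_neg (by
                simp only [Fin.ext_iff]
                have := Fin.val_ne_of_ne hk
                omega), mul_zero])
            (fun h => absurd (Finset.mem_univ k0) h)]
          rw [Pi.single_apply, if_pos rfl, mul_one]
    · intro hmem
      refine Submodule.span_induction ?_ ?_ ?_ ?_ hmem
      · rintro f ⟨k, rfl⟩
        constructor
        · intro x y
          obtain ⟨x1, x2⟩ := x; obtain ⟨y1, y2⟩ := y
          rw [hBr]
          simp only [LinearMap.comp_apply, LinearMap.snd_apply, LinearMap.proj_apply]
          show ((ρ x1) y2 - (ρ y1) x2) ⟨2*n + (k : ℕ), by omega⟩ = 0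
          show (ρ x1) y2 ⟨2*n + (k : ℕ), by omega⟩ - (ρ y1) x2 ⟨2*n + (k : ℕ), by omega⟩ = 0
          rw [hρ_high x1 y2 _ (Nat.le_add_right _ _), hρ_high y1 x2 _ (Nat.le_add_right _ _),
            sub_zero]
        · intro x
          simp
      · exact ⟨fun x y => rfl, fun x => rfl⟩
      · rintro f g _ _ ⟨hf1, hf2⟩ ⟨hg1, hg2⟩
        exact ⟨fun x y => by simp [hf1 x y, hg1 x y], fun x => by simp [hf2 x, hg2 x]⟩
      · rintro a f _ ⟨hf1, hf2⟩
        exact ⟨fun x y => by simp [hf1 x y], fun x => by simp [hf2 x]⟩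
  · -- linear independence
    rw [Fintype.linearIndependent_iff]
    intro g hg k
    have hev := LinearMap.congr_fun hg
      ((0, Pi.single ⟨2*n + (k : ℕ), by omega⟩ 1) : L × (Fin (2*n+t) → F))
    simp only [LinearMap.sum_apply, LinearMap.smul_apply, smul_eq_mul, LinearMap.comp_apply,
      LinearMap.snd_apply, LinearMap.proj_apply, LinearMap.zero_apply] at hev
    rw [Finset.sum_eq_single k (fun i _ hik => by
        rw [Pi.single_apply, if_neg (by
          simp only [Fin.ext_iff]
          have := Fin.val_ne_of_ne hik
          omega), mul_zero])
      (fun h => absurd (Finset.mem_univ k) h)] at hev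
    rw [Pi.single_apply, if_pos rfl, mul_one] at hev
    exact hev
end

section
/- Let F be an algebraically closed field of characteristic p > 2, m ≥ 1, and λ_1,…,λ_m ∈ F nonzero. Fix 1 ≤ k < l ≤ 2m and let φ = e^{k,l} be the alternating bilinear form on the twisted Heisenberg Lie algebra L = h^λ_m with φ(e_k,e_l) = 1 = −φ(e_l,e_k) and φ = 0 on all other pairs of basis vectors. If ω : L → F is φ-compatible and ω(e_i) = 0 for all 1 ≤ i ≤ 2m+2, then for every g = Σ_{i=1}^{2m+2} d_i e_i one has ω(g) = −2^{−1} d_{2m+2}^{p−2} Σ_{i=1}^{m} Σ_{j=1}^{2m} λ_i^{p−2} ( d_i d_j φ(e_{m+i}, e_j) + d_{m+i} d_j φ(e_i, e_j) ). -/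
/-- `ω : L → F` is `φ`-compatible (`φ` a bilinear form on a Lie algebra `L`):
`ω(c g) = c^p ω(g)` and
`ω(g+h) = ω(g) + ω(h) + Σ (1/#(g)) φ([g₁,g₂,…,g_{p-1}], g_p)`, the sum over all
`p`-tuples `(g₁,…,g_p)` of elements of `{g,h}` with `g₁ = g`, `g₂ = h` (encoded
by the subset `S ⊆ {0,…,p-1}` of 0-indexed positions carrying `g`), where
`#(g) = |S|` and `[g₁,…,g_j]` is the left-normed iterated bracket. -/
def IsCompatL {F : Type*} [Field F] (p : ℕ) {L : Type*} [LieRing L] [Module F L]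
    (φ : L → L → F) (ω : L → F) : Prop :=
  (∀ (c : F) (g : L), ω (c • g) = c ^ p * ω g) ∧
  (∀ g h : L, ω (g + h) = ω g + ω h +
    ∑ S ∈ (Finset.range p).powerset.filter (fun S => 0 ∈ S ∧ 1 ∉ S),
      ((S.card : F))⁻¹ *
        φ (List.foldl (fun x k => ⁅x, if k ∈ S then g else h⁆) g
            ((List.range (p-1)).drop 1))
          (if p - 1 ∈ S then g else h))

section Aux
variable {F : Type*} [Field F] {L : Type*} [LieRing L] [LieAlgebra F L]

def brL (y : L) : L →ₗ[F] L where
  toFun a := ⁅a, y⁆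
  map_add' a b := add_lie a b y
  map_smul' c a := smul_lie c a y

@[simp] lemma brL_apply (y a : L) : (brL (F := F) y) a = ⁅a, y⁆ := rfl

def brR (x : L) : L →ₗ[F] L where
  toFun a := ⁅x, a⁆
  map_add' a b := lie_add x a b
  map_smul' c a := lie_smul c x a

@[simp] lemma brR_apply (x a : L) : (brR (F := F) x) a = ⁅x, a⁆ := rfl

def Caux (m : ℕ) (lam d : ℕ → F) (e : ℕ → L) (r : ℕ) : L :=
  ∑ i ∈ Finset.range m,
    (((lam i) ^ r * d i) • e (if r % 2 = 1 then m + i else i)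
      + ((lam i) ^ r * d (m + i)) • e (if r % 2 = 1 then i else m + i))

end Aux

set_option maxHeartbeats 1000000 in
/-- Let `F` be algebraically closed of characteristic `p > 2`,
`m ≥ 1`, `λ_i ≠ 0`, and fix `0 ≤ k < l < 2m` (0-indexed version of
`1 ≤ k < l ≤ 2m`).  Let `φ = e^{k,l}` be the alternating bilinear form on the
twisted Heisenberg Lie algebra `h^λ_m` with `φ(e_k, e_l) = 1 = −φ(e_l, e_k)` and
`φ = 0` on all other basis pairs.  If `ω` is `φ`-compatible and vanishes on all
basis vectors, then for `g = Σ d_i e_i`,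
`ω(g) = −2⁻¹ d_{2m+2}^{p-2} Σ_{i<m} Σ_{j<2m} λ_i^{p-2}
   (d_i d_j φ(e_{m+i}, e_j) + d_{m+i} d_j φ(e_i, e_j))`. -/
theorem stmt_14
    (F : Type*) [Field F] [IsAlgClosed F]
    (p : ℕ) [Fact (Nat.Prime p)] [CharP F p] (hp2 : 2 < p)
    (m : ℕ) (hm : 1 ≤ m)
    (lam : ℕ → F) (hlam : ∀ i, i < m → lam i ≠ 0)
    (L : Type*) [LieRing L] [LieAlgebra F L]
    (b : Module.Basis (Fin (2*m+2)) F L)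
    (e : ℕ → L) (he : ∀ i : Fin (2*m+2), e (i : ℕ) = b i)
    (hbr : ∀ i j : ℕ, i < 2*m+2 → j < 2*m+2 →
      ⁅e i, e j⁆ =
        if i < m ∧ j = m + i then e (2*m)
        else if j < m ∧ i = m + j then - e (2*m)
        else if i = 2*m+1 ∧ j < m then lam j • e (m + j)
        else if i = 2*m+1 ∧ m ≤ j ∧ j < 2*m then lam (j-m) • e (j-m)
        else if j = 2*m+1 ∧ i < m then - (lam i • e (m + i))
        else if j = 2*m+1 ∧ m ≤ i ∧ i < 2*m then - (lam (i-m) • e (i-m))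
        else 0)
    (k l : ℕ) (hk : k < l) (hl : l < 2*m)
    (φ : L → L → F)
    (hφ : φ = fun x y =>
      (b.repr x ⟨k, by omega⟩ : F) * b.repr y ⟨l, by omega⟩
        - (b.repr x ⟨l, by omega⟩ : F) * b.repr y ⟨k, by omega⟩)
    (ω : L → F)
    (hcompat : IsCompatL p φ ω)
    (hω0 : ∀ i, i < 2*m+2 → ω (e i) = 0) :
    ∀ d : ℕ → F,
      ω (∑ i ∈ Finset.range (2*m+2), d i • e i)
        = -(2 : F)⁻¹ * d (2*m+1) ^ (p-2) *
            ∑ i ∈ Finset.range m, ∑ j ∈ Finset.range (2*m),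
              lam i ^ (p-2) *
                (d i * d j * φ (e (m+i)) (e j) + d (m+i) * d j * φ (e i) (e j)) := by
  intro d
  have hpp : Nat.Prime p := Fact.out
  have hodd : p % 2 = 1 := Nat.odd_iff.mp (hpp.odd_of_ne_two (by omega))
  -- basic repr facts
  have hbe : ∀ i (h : i < 2*m+2), e i = b ⟨i, h⟩ := fun i h => (he ⟨i, h⟩)
  have hrepr : ∀ i (h : i < 2*m+2) (q : Fin (2*m+2)),
      b.repr (e i) q = if i = (q : ℕ) then 1 else 0 := by
    intro i h q
    rw [show e i = b ⟨i, h⟩ from hbe i h, b.repr_self, Finsupp.single_apply]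
    simp [Fin.ext_iff]
  have hkk : k < 2*m+2 := by omega
  have hll : l < 2*m+2 := by omega
  have hφx : ∀ x y : L, φ x y
      = (b.repr x ⟨k, hkk⟩ : F) * b.repr y ⟨l, hll⟩
        - (b.repr x ⟨l, hll⟩ : F) * b.repr y ⟨k, hkk⟩ := by
    intro x y; rw [hφ]
  -- φ linearity lemmas
  have φ_sum_left : ∀ (s : Finset ℕ) (f : ℕ → L) (y : L),
      φ (∑ i ∈ s, f i) y = ∑ i ∈ s, φ (f i) y := by
    intro s f y
    simp only [hφx, map_sum, Finset.sum_apply', Finset.sum_mul, Finset.sum_sub_distrib]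
  have φ_add_left : ∀ (x x' y : L), φ (x + x') y = φ x y + φ x' y := by
    intro x x' y; simp only [hφx, map_add, Finsupp.add_apply]; ring
  have φ_smul_left : ∀ (c : F) (x y : L), φ (c • x) y = c * φ x y := by
    intro c x y; simp only [hφx, map_smul, Finsupp.smul_apply, smul_eq_mul]; ring
  have φ_sum_right : ∀ (s : Finset ℕ) (f : ℕ → L) (x : L),
      φ x (∑ i ∈ s, f i) = ∑ i ∈ s, φ x (f i) := by
    intro s f x
    simp only [hφx, map_sum, Finset.sum_apply', Finset.mul_sum, Finset.sum_sub_distrib]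
  have φ_smul_right : ∀ (c : F) (x y : L), φ x (c • y) = c * φ x y := by
    intro c x y; simp only [hφx, map_smul, Finsupp.smul_apply, smul_eq_mul]; ring
  have hr2mk : b.repr (e (2*m)) (⟨k, hkk⟩ : Fin (2*m+2)) = 0 := by
    rw [hrepr (2*m) (by omega)]; simp; omega
  have hr2ml : b.repr (e (2*m)) (⟨l, hll⟩ : Fin (2*m+2)) = 0 := by
    rw [hrepr (2*m) (by omega)]; simp; omega
  have hr2m1k : b.repr (e (2*m+1)) (⟨k, hkk⟩ : Fin (2*m+2)) = 0 := by
    rw [hrepr (2*m+1) (by omega)]; simp; omega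
  have hr2m1l : b.repr (e (2*m+1)) (⟨l, hll⟩ : Fin (2*m+2)) = 0 := by
    rw [hrepr (2*m+1) (by omega)]; simp; omega
  have φ_z : ∀ (c : F) (y : L), φ (c • e (2*m)) y = 0 := by
    intro c y
    rw [φ_smul_left, hφx, hr2mk, hr2ml]; ring
  have φ_c : ∀ z : L, φ z (e (2*m)) = 0 := by
    intro z; rw [hφx, hr2mk, hr2ml]; ring
  have φ_w : ∀ (z : L) (c : F), φ z (c • e (2*m+1)) = 0 := by
    intro z c; rw [φ_smul_right, hφx, hr2m1k, hr2m1l]; ring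
  -- centrality of e (2m)
  have hcent : ∀ z : L, ⁅e (2*m), z⁆ = 0 := by
    have h0 : brR (F := F) (e (2*m)) = 0 := by
      apply Module.Basis.ext b
      intro i
      rw [brR_apply, ← he i, hbr (2*m) i (by omega) i.isLt]
      split_ifs <;> first | rfl | (exfalso; omega)
    intro z
    have := LinearMap.congr_fun h0 z
    simpa using this
  -- basis brackets with e(2m+1)
  have hbe1 : ∀ i, i < m → ⁅e i, e (2*m+1)⁆ = -(lam i • e (m + i)) := by
    intro i hi
    rw [hbr i (2*m+1) (by omega) (by omega)]
    split_ifs <;> first | rfl | (exfalso; omega)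
  have hbe2 : ∀ i, i < m → ⁅e (m+i), e (2*m+1)⁆ = -(lam i • e i) := by
    intro i hi
    rw [hbr (m+i) (2*m+1) (by omega) (by omega)]
    split_ifs <;> first | (exfalso; omega) | (simp [Nat.add_sub_cancel_left])
  -- submodules
  set Z : Submodule F L := Submodule.span F {e (2*m)} with hZdef
  set W : Submodule F L := Submodule.span F (e '' Set.Iio (2*m+1)) with hWdef
  have heW : ∀ i, i < 2*m+1 → e i ∈ W := by
    intro i hi
    exact Submodule.subset_span ⟨i, hi, rfl⟩
  have he2mZ : e (2*m) ∈ Z := Submodule.subset_span rfl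
  have hZW : Z ≤ W := by
    rw [hZdef, Submodule.span_le, Set.singleton_subset_iff]
    exact heW (2*m) (by omega)
  have hZlie : ∀ z ∈ Z, ∀ y : L, ⁅z, y⁆ = 0 := by
    intro z hz y
    obtain ⟨c, hc⟩ := Submodule.mem_span_singleton.mp hz
    rw [← hc, smul_lie, hcent, smul_zero]
  have hgenZ : ∀ i j, i < 2*m+1 → j < 2*m+1 → ⁅e i, e j⁆ ∈ Z := by
    intro i j hi hj
    rw [hbr i j (by omega) (by omega)]
    split_ifs
    · exact he2mZ
    · exact neg_mem he2mZ
    · exfalso; omega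
    · exfalso; omega
    · exfalso; omega
    · exfalso; omega
    · exact zero_mem Z
  have hWlieW : ∀ a ∈ W, ∀ c ∈ W, ⁅a, c⁆ ∈ Z := by
    have h2 : ∀ i, i < 2*m+1 → ∀ c ∈ W, ⁅e i, c⁆ ∈ Z := by
      intro i hi
      have hle : W ≤ Z.comap (brR (F := F) (e i)) := by
        rw [hWdef, Submodule.span_le]
        rintro _ ⟨j, hj, rfl⟩
        exact hgenZ i j hi hj
      intro c hc
      exact hle hc
    intro a ha c hc
    have hle : W ≤ Z.comap (brL (F := F) c) := by
      rw [hWdef, Submodule.span_le]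
      rintro _ ⟨i, hi, rfl⟩
      exact h2 i hi c hc
    exact hle ha
  have hWw : ∀ a ∈ W, ⁅a, e (2*m+1)⁆ ∈ W := by
    have hle : W ≤ W.comap (brL (F := F) (e (2*m+1))) := by
      rw [hWdef, Submodule.span_le]
      rintro _ ⟨i, hi, rfl⟩
      show ⁅e i, e (2*m+1)⁆ ∈ W
      have hi' : i < 2*m+1 := hi
      rcases lt_or_ge i m with h1 | h1
      · rw [hbe1 i h1]
        exact neg_mem (Submodule.smul_mem _ _ (heW (m+i) (by omega)))
      · rcases lt_or_ge i (2*m) with h2 | h2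
        · obtain ⟨i', rfl⟩ : ∃ i', i = m + i' := ⟨i - m, by omega⟩
          rw [hbe2 i' (by omega)]
          exact neg_mem (Submodule.smul_mem _ _ (heW i' (by omega)))
        · have : i = 2*m := by omega
          subst this
          rw [hcent]
          exact zero_mem W
    intro a ha
    exact hle ha
  -- fold lemmas
  have foldZ : ∀ (G : ℕ → L) (t : List ℕ) (a : L), a ∈ Z →
      List.foldl (fun x kk => ⁅x, G kk⁆) a t ∈ Z := by
    intro G t
    induction t with
    | nil => intro a ha; simpa using ha
    | cons kk t ih =>
      intro a ha
      rw [List.foldl_cons]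
      apply ih
      rw [hZlie a ha]
      exact zero_mem Z
  have foldW : ∀ (G : ℕ → L), (∀ kk, G kk ∈ W ∨ ∃ c : F, G kk = c • e (2*m+1)) →
      ∀ (t : List ℕ) (a : L), a ∈ W →
      List.foldl (fun x kk => ⁅x, G kk⁆) a t ∈ W := by
    intro G hG t
    induction t with
    | nil => intro a ha; simpa using ha
    | cons kk t ih =>
      intro a ha
      rw [List.foldl_cons]
      apply ih
      rcases hG kk with h | ⟨c, hc⟩
      · exact hZW (hWlieW a ha _ h)
      · rw [hc, lie_smul]
        exact Submodule.smul_mem _ _ (hWw a ha)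
  -- the list of fold positions
  have htl2 : (List.range (p-1)).drop 1 = 1 :: List.range' 2 (p-3) := by
    rw [List.range_eq_range', show p-1 = (p-2)+1 from by omega, List.range'_succ,
      List.drop_succ_cons, List.drop_zero, show p-2 = (p-3)+1 from by omega,
      List.range'_succ]
  have htlmem : ∀ j, j ∈ (List.range (p-1)).drop 1 → 1 ≤ j ∧ j < p - 1 := by
    intro j hj
    rw [htl2] at hj
    rcases List.mem_cons.mp hj with h | h
    · omega
    · obtain ⟨i, hi1, hi2⟩ := List.mem_range'.mp h
      omega
  -- ω vanishes at 0
  have hω00 : ω (0 : L) = 0 := by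
    have h := hcompat.1 0 0
    rw [zero_smul, zero_pow (by omega : p ≠ 0), zero_mul] at h
    exact h
  -- ω vanishes on the e(2m+1)-free part
  have hzero : ∀ n, n ≤ 2*m+1 → ω (∑ i ∈ Finset.range n, d i • e i) = 0 := by
    intro n
    induction n with
    | zero => intro _; simpa using hω00
    | succ n ih =>
      intro hn
      rw [Finset.sum_range_succ, hcompat.2, ih (by omega), hcompat.1,
        hω0 n (by omega), mul_zero, zero_add, zero_add]
      apply Finset.sum_eq_zero
      intro S hS
      have hWg : (∑ i ∈ Finset.range n, d i • e i) ∈ W :=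
        Submodule.sum_mem _ (fun i hi =>
          Submodule.smul_mem _ _ (heW i (by
            have := Finset.mem_range.mp hi; omega)))
      have hWh : (d n • e n) ∈ W := Submodule.smul_mem _ _ (heW n (by omega))
      have hfold : (List.foldl
          (fun x kk => ⁅x, if kk ∈ S then (∑ i ∈ Finset.range n, d i • e i)
            else d n • e n⁆)
          (∑ i ∈ Finset.range n, d i • e i) ((List.range (p-1)).drop 1)) ∈ Z := by
        rw [htl2, List.foldl_cons]
        apply foldZ
        apply hWlieW _ hWg
        split
        · exact hWg
        · exact hWh
      obtain ⟨c, hc⟩ := Submodule.mem_span_singleton.mp hfold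
      rw [← hc, φ_z, mul_zero]
  -- bracket of Caux with e(2m+1)
  have hCe : ∀ r : ℕ, ⁅(Caux m lam d e r : L), e (2*m+1)⁆ = -(Caux m lam d e (r+1)) := by
    intro r
    have hmap : ⁅(Caux m lam d e r : L), e (2*m+1)⁆
        = (brL (F := F) (e (2*m+1))) (Caux m lam d e r) := rfl
    rw [hmap]
    unfold Caux
    rw [map_sum, ← Finset.sum_neg_distrib]
    apply Finset.sum_congr rfl
    intro i hi
    have him : i < m := Finset.mem_range.mp hi
    rw [map_add, map_smul, map_smul, brL_apply, brL_apply]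
    by_cases hr : r % 2 = 1
    · have hr2 : ¬((r+1) % 2 = 1) := by omega
      rw [if_pos hr, if_pos hr, if_neg hr2, if_neg hr2, hbe2 i him, hbe1 i him]
      rw [smul_neg, smul_neg, smul_smul, smul_smul, ← neg_add]
      congr 2 <;> ring
    · have hr2 : (r+1) % 2 = 1 := by omega
      rw [if_neg hr, if_neg hr, if_pos hr2, if_pos hr2, hbe1 i him, hbe2 i him]
      rw [smul_neg, smul_neg, smul_smul, smul_smul, ← neg_add]
      congr 2 <;> ring
  -- iterated fold with w
  have FC : ∀ (t : List ℕ) (r : ℕ) (c : F),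
      List.foldl (fun a (_ : ℕ) => ⁅a, d (2*m+1) • e (2*m+1)⁆)
        (c • Caux m lam d e r) t
      = (c * (-(d (2*m+1))) ^ t.length) • Caux m lam d e (r + t.length) := by
    intro t
    induction t with
    | nil => intro r c; simp
    | cons kk t ih =>
      intro r c
      rw [List.foldl_cons]
      have h1 : ⁅c • Caux m lam d e r, d (2*m+1) • e (2*m+1)⁆
          = (c * (-(d (2*m+1)))) • Caux m lam d e (r+1) := by
        rw [smul_lie, lie_smul, hCe, smul_neg, smul_neg, smul_smul, mul_neg, neg_smul]
      rw [h1, ih (r+1) (c * -(d (2*m+1)))]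
      rw [show r + 1 + t.length = r + (t.length + 1) from by omega]
      congr 1
      rw [List.length_cons, pow_succ']
      ring
  -- bracket of x with w
  have hxw : ⁅(∑ i ∈ Finset.range (2*m+1), d i • e i : L), d (2*m+1) • e (2*m+1)⁆
      = (-(d (2*m+1))) • Caux m lam d e 1 := by
    rw [lie_smul]
    have hmap : ⁅(∑ i ∈ Finset.range (2*m+1), d i • e i : L), e (2*m+1)⁆
        = (brL (F := F) (e (2*m+1))) (∑ i ∈ Finset.range (2*m+1), d i • e i) := rfl
    rw [hmap, map_sum]
    have hsplit : ∑ i ∈ Finset.range (2*m+1),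
        (brL (F := F) (e (2*m+1))) (d i • e i)
        = (∑ i ∈ Finset.range m, (brL (F := F) (e (2*m+1))) (d i • e i))
          + ∑ i ∈ Finset.range m, (brL (F := F) (e (2*m+1))) (d (m+i) • e (m+i)) := by
      rw [Finset.sum_range_succ]
      have h2m : (brL (F := F) (e (2*m+1))) (d (2*m) • e (2*m)) = 0 := by
        rw [map_smul, brL_apply]
        have : ⁅e (2*m), e (2*m+1)⁆ = 0 := hcent _
        rw [this, smul_zero]
      rw [h2m, add_zero,
        ← Finset.sum_range_add_sum_Ico _ (show m ≤ 2*m by omega)]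
      congr 1
      rw [Finset.sum_Ico_eq_sum_range, show 2*m - m = m from by omega]
    rw [hsplit]
    have hsum2 : (∑ i ∈ Finset.range m, (brL (F := F) (e (2*m+1))) (d i • e i))
          + ∑ i ∈ Finset.range m, (brL (F := F) (e (2*m+1))) (d (m+i) • e (m+i))
        = -(Caux m lam d e 1) := by
      unfold Caux
      simp only [reduceIte, pow_one]
      rw [← Finset.sum_add_distrib, ← Finset.sum_neg_distrib]
      apply Finset.sum_congr rfl
      intro i hi
      have him : i < m := Finset.mem_range.mp hi
      rw [map_smul, map_smul, brL_apply, brL_apply, hbe1 i him, hbe2 i him,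
        smul_neg, smul_neg, smul_smul, smul_smul]
      simp only [smul_neg, smul_smul, neg_add]
      try (congr 2 <;> ring)
    rw [hsum2, smul_neg, neg_smul]
  -- main computation
  have hsplitsum : (∑ i ∈ Finset.range (2*m+2), d i • e i : L)
      = (∑ i ∈ Finset.range (2*m+1), d i • e i) + d (2*m+1) • e (2*m+1) := by
    rw [show 2*m+2 = (2*m+1)+1 from rfl, Finset.sum_range_succ]
  rw [hsplitsum, hcompat.2, hzero (2*m+1) le_rfl, hcompat.1,
    hω0 (2*m+1) (by omega), mul_zero, zero_add, zero_add]
  have hS0mem : ({0, p-1} : Finset ℕ) ∈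
      (Finset.range p).powerset.filter (fun S => 0 ∈ S ∧ 1 ∉ S) := by
    refine Finset.mem_filter.mpr ⟨Finset.mem_powerset.mpr ?_, ?_, ?_⟩
    · intro j hj
      rcases Finset.mem_insert.mp hj with rfl | hj
      · exact Finset.mem_range.mpr (by omega)
      · rw [Finset.mem_singleton] at hj; subst hj; exact Finset.mem_range.mpr (by omega)
    · exact Finset.mem_insert_self _ _
    · intro hc
      rcases Finset.mem_insert.mp hc with h | h
      · omega
      · rw [Finset.mem_singleton] at h; omega
  have hothers : ∀ S ∈ (Finset.range p).powerset.filter (fun S => 0 ∈ S ∧ 1 ∉ S),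
      S ≠ ({0, p-1} : Finset ℕ) →
      ((S.card : F))⁻¹ *
        φ (List.foldl (fun x kk => ⁅x, if kk ∈ S then
              (∑ i ∈ Finset.range (2*m+1), d i • e i) else d (2*m+1) • e (2*m+1)⁆)
            (∑ i ∈ Finset.range (2*m+1), d i • e i) ((List.range (p-1)).drop 1))
          (if p - 1 ∈ S then (∑ i ∈ Finset.range (2*m+1), d i • e i)
            else d (2*m+1) • e (2*m+1)) = 0 := by
    intro S hS hSne
    obtain ⟨hSsub, h0S, h1S⟩ := Finset.mem_filter.mp hS
    rw [Finset.mem_powerset] at hSsub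
    by_cases hpS : p - 1 ∈ S
    · -- there must be a middle element of S
      have hj : ∃ j ∈ S, 2 ≤ j ∧ j ≤ p - 2 := by
        by_contra hno
        push_neg at hno
        apply hSne
        ext j
        simp only [Finset.mem_insert, Finset.mem_singleton]
        constructor
        · intro hjj
          have hjp : j < p := Finset.mem_range.mp (hSsub hjj)
          have hj1 : j ≠ 1 := fun hh => h1S (hh ▸ hjj)
          have := hno j hjj
          omega
        · rintro (rfl | rfl)
          · exact h0S
          · exact hpS
      obtain ⟨j, hjS, hj2, hjp2⟩ := hj
      have hjtl : j ∈ (List.range (p-1)).drop 1 := by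
        rw [htl2]
        exact List.mem_cons_of_mem _ (List.mem_range'.mpr ⟨j - 2, by omega, by omega⟩)
      obtain ⟨t₁, t₂, ht⟩ := List.append_of_mem hjtl
      have hXW : (∑ i ∈ Finset.range (2*m+1), d i • e i : L) ∈ W :=
        Submodule.sum_mem _ (fun i hi =>
          Submodule.smul_mem _ _ (heW i (Finset.mem_range.mp hi)))
      have hG : ∀ kk : ℕ,
          (if kk ∈ S then (∑ i ∈ Finset.range (2*m+1), d i • e i : L)
            else d (2*m+1) • e (2*m+1)) ∈ W ∨
          ∃ c : F, (if kk ∈ S then (∑ i ∈ Finset.range (2*m+1), d i • e i : L)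
            else d (2*m+1) • e (2*m+1)) = c • e (2*m+1) := by
        intro kk
        split
        · exact Or.inl hXW
        · exact Or.inr ⟨d (2*m+1), rfl⟩
      rw [ht, List.foldl_append, List.foldl_cons]
      have hmem : List.foldl
          (fun x kk => ⁅x, if kk ∈ S then (∑ i ∈ Finset.range (2*m+1), d i • e i)
            else d (2*m+1) • e (2*m+1)⁆)
          ⁅List.foldl (fun x kk => ⁅x, if kk ∈ S then
              (∑ i ∈ Finset.range (2*m+1), d i • e i) else d (2*m+1) • e (2*m+1)⁆)
            (∑ i ∈ Finset.range (2*m+1), d i • e i) t₁,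
            if j ∈ S then (∑ i ∈ Finset.range (2*m+1), d i • e i)
              else d (2*m+1) • e (2*m+1)⁆ t₂ ∈ Z := by
        apply foldZ
        rw [if_pos hjS]
        exact hWlieW _ (foldW _ hG t₁ _ hXW) _ hXW
      obtain ⟨c, hc⟩ := Submodule.mem_span_singleton.mp hmem
      rw [← hc, φ_z, mul_zero]
    · rw [if_neg hpS, φ_w, mul_zero]
  rw [Finset.sum_eq_single_of_mem _ hS0mem hothers]
  have hppmem : p - 1 ∈ ({0, p-1} : Finset ℕ) := by
    apply Finset.mem_insert.mpr
    right
    exact Finset.mem_singleton_self _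
  have hcard : ({0, p-1} : Finset ℕ).card = 2 := by
    rw [Finset.card_insert_of_notMem (by rw [Finset.mem_singleton]; omega),
      Finset.card_singleton]
  have hext : List.foldl (fun x kk => ⁅x, if kk ∈ ({0, p-1} : Finset ℕ) then
        (∑ i ∈ Finset.range (2*m+1), d i • e i) else d (2*m+1) • e (2*m+1)⁆)
        (∑ i ∈ Finset.range (2*m+1), d i • e i) ((List.range (p-1)).drop 1)
      = List.foldl (fun a _ => ⁅a, d (2*m+1) • e (2*m+1)⁆)
        (∑ i ∈ Finset.range (2*m+1), d i • e i) ((List.range (p-1)).drop 1) := by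
    apply List.foldl_ext
    intro a kk hkk
    have hb := htlmem kk hkk
    rw [if_neg]
    intro hc
    rcases Finset.mem_insert.mp hc with h | h
    · omega
    · rw [Finset.mem_singleton] at h; omega
  have hfold : List.foldl (fun a (_ : ℕ) => ⁅a, d (2*m+1) • e (2*m+1)⁆)
        (∑ i ∈ Finset.range (2*m+1), d i • e i) ((List.range (p-1)).drop 1)
      = (-(d (2*m+1)))^(p-2) • Caux m lam d e (p-2) := by
    rw [htl2, List.foldl_cons, hxw, FC, List.length_range']
    rw [show 1 + (p-3) = p - 2 from by omega, ← pow_succ',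
      show (p-3)+1 = p-2 from by omega]
  rw [hext, hfold, hcard, if_pos hppmem, φ_smul_left,
    Odd.neg_pow (Nat.odd_iff.mpr (show (p-2) % 2 = 1 from by omega))]
  have hex : ∀ q : ℕ, φ (e q) (∑ j ∈ Finset.range (2*m+1), d j • e j)
      = ∑ j ∈ Finset.range (2*m), d j * φ (e q) (e j) := by
    intro q
    rw [φ_sum_right, Finset.sum_range_succ]
    have h0 : φ (e q) (d (2*m) • e (2*m)) = 0 := by rw [φ_smul_right, φ_c, mul_zero]
    rw [h0, add_zero]
    apply Finset.sum_congr rfl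
    intro j hj
    rw [φ_smul_right]
  have hCodd : Caux m lam d e (p-2) = ∑ i ∈ Finset.range m,
      ((lam i ^ (p-2) * d i) • e (m+i) + (lam i ^ (p-2) * d (m+i)) • e i) := by
    unfold Caux
    apply Finset.sum_congr rfl
    intro i hi
    rw [if_pos (show (p-2) % 2 = 1 from by omega),
      if_pos (show (p-2) % 2 = 1 from by omega)]
  have hCx : φ (Caux m lam d e (p-2)) (∑ i ∈ Finset.range (2*m+1), d i • e i)
      = ∑ i ∈ Finset.range m,
          (lam i ^ (p-2) * d i * (∑ j ∈ Finset.range (2*m), d j * φ (e (m+i)) (e j))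
          + lam i ^ (p-2) * d (m+i) * (∑ j ∈ Finset.range (2*m), d j * φ (e i) (e j))) := by
    rw [hCodd, φ_sum_left]
    apply Finset.sum_congr rfl
    intro i hi
    rw [φ_add_left, φ_smul_left, φ_smul_left, hex, hex]
    try ring
  rw [hCx]
  have hswap : ∑ i ∈ Finset.range m, ∑ j ∈ Finset.range (2*m),
        lam i ^ (p-2) * (d i * d j * φ (e (m+i)) (e j) + d (m+i) * d j * φ (e i) (e j))
      = ∑ i ∈ Finset.range m,
          (lam i ^ (p-2) * d i * (∑ j ∈ Finset.range (2*m), d j * φ (e (m+i)) (e j))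
          + lam i ^ (p-2) * d (m+i) * (∑ j ∈ Finset.range (2*m), d j * φ (e i) (e j))) := by
    apply Finset.sum_congr rfl
    intro i hi
    rw [Finset.mul_sum, Finset.mul_sum, ← Finset.sum_add_distrib]
    apply Finset.sum_congr rfl
    intro j hj
    ring
  rw [hswap]
  push_cast
  ring
end
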